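/- arXiv:1201.2834 — 4 statements merged into one kernel-verified Lean document; each statement's English description precedes it below -/
import Mathlib

section
/- For every concurrent game structure G with a target set T ⊆ S of states and every ε > 0, there exists a memoryless strategy σ₁ for player 1 such that for all states s ∈ S, inf over all player-2 strategies σ₂ of Pr_s^{σ₁,σ₂}(Reach(T)) is at least ⟨1⟩val(Reach(T))(s) − ε; that is, memoryless ε-optimal strategies exist for concurrent reachability games. -/
open scoped Classical

/-- A (two-player) concurrent game structure: a finite state space `S`, a finite
set `M` of moves, move assignments `Γ₁ Γ₂ : S → Finset M`, and a probabilistic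
transition function `δ`. -/
structure CGame (S : Type) (M : Type) where
  Γ₁ : S → Finset M
  Γ₂ : S → Finset M
  δ : S → M → M → S → ℝ

namespace CGame

variable {S M : Type} [Fintype S] [DecidableEq S] [Fintype M] [DecidableEq M]

/-- Well-formedness of a concurrent game structure: move sets are nonempty and
`δ s a b` is a probability distribution over states. -/
def IsGame (G : CGame S M) : Prop :=
  (∀ s, (G.Γ₁ s).Nonempty) ∧ (∀ s, (G.Γ₂ s).Nonempty) ∧
    (∀ s a b t, 0 ≤ G.δ s a b t) ∧ (∀ s a b, (∑ t, G.δ s a b t) = 1)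

/-- `x : M → ℝ` is a probability distribution supported on `A`. -/
def IsDistOn (A : Finset M) (x : M → ℝ) : Prop :=
  (∀ a, 0 ≤ x a) ∧ (∀ a, x a ≠ 0 → a ∈ A) ∧ (∑ a, x a) = 1

/-- A selector for player 1. -/
def IsSel1 (G : CGame S M) (ξ : S → M → ℝ) : Prop := ∀ s, IsDistOn (G.Γ₁ s) (ξ s)

/-- A selector for player 2. -/
def IsSel2 (G : CGame S M) (ξ : S → M → ℝ) : Prop := ∀ s, IsDistOn (G.Γ₂ s) (ξ s)

/-- A strategy for player 1: maps a history (past states `w` and current state `s`)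
to a distribution over the moves available at `s`. -/
def IsStrat1 (G : CGame S M) (σ : List S → S → M → ℝ) : Prop :=
  ∀ w s, IsDistOn (G.Γ₁ s) (σ w s)

/-- A strategy for player 2. -/
def IsStrat2 (G : CGame S M) (σ : List S → S → M → ℝ) : Prop :=
  ∀ w s, IsDistOn (G.Γ₂ s) (σ w s)

/-- The memoryless strategy induced by a selector. -/
def ml (ξ : S → M → ℝ) : List S → S → M → ℝ := fun _ s => ξ s

/-- The pure (Dirac) distribution on a move `b`. -/
def pureDist (b : M) : M → ℝ := fun b' => if b' = b then 1 else 0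

/-- The player-1 selector choosing all available moves uniformly at random. -/
noncomputable def uniformSel (G : CGame S M) : S → M → ℝ :=
  fun s a => if a ∈ G.Γ₁ s then (1 : ℝ) / (G.Γ₁ s).card else 0

/-- Probability of reaching `T` within `n` steps, starting from history `w`
and current state `s`, under strategies `σ₁, σ₂`. -/
noncomputable def reachW (G : CGame S M) (σ₁ σ₂ : List S → S → M → ℝ) (T : Set S) :
    ℕ → List S → S → ℝ
  | 0, _, s => if s ∈ T then 1 else 0
  | n + 1, w, s =>
      if s ∈ T then 1
      else ∑ a : M, ∑ b : M, ∑ t : S,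
        σ₁ w s a * σ₂ w s b * G.δ s a b t * reachW G σ₁ σ₂ T n (w ++ [s]) t

/-- Probability of staying in `F` for `n` steps, starting from history `w`
and current state `s`, under strategies `σ₁, σ₂`. -/
noncomputable def safeW (G : CGame S M) (σ₁ σ₂ : List S → S → M → ℝ) (F : Set S) :
    ℕ → List S → S → ℝ
  | 0, _, s => if s ∈ F then 1 else 0
  | n + 1, w, s =>
      if s ∈ F then
        ∑ a : M, ∑ b : M, ∑ t : S,
          σ₁ w s a * σ₂ w s b * G.δ s a b t * safeW G σ₁ σ₂ F n (w ++ [s]) t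
      else 0

/-- `Pr_s^{σ₁,σ₂}(Reach T)`: probability of eventually reaching `T` from `s`. -/
noncomputable def prReach (G : CGame S M) (σ₁ σ₂ : List S → S → M → ℝ) (T : Set S)
    (s : S) : ℝ :=
  ⨆ n : ℕ, reachW G σ₁ σ₂ T n [] s

/-- `Pr_s^{σ₁,σ₂}(Safe F)`: probability that the play stays in `F` forever. -/
noncomputable def prSafe (G : CGame S M) (σ₁ σ₂ : List S → S → M → ℝ) (F : Set S)
    (s : S) : ℝ :=
  ⨅ n : ℕ, safeW G σ₁ σ₂ F n [] s

/-- `⟨1⟩val^{σ₁}(Reach T)(s) = inf_{σ₂} Pr_s^{σ₁,σ₂}(Reach T)`. -/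
noncomputable def valReachUnder (G : CGame S M) (σ₁ : List S → S → M → ℝ) (T : Set S)
    (s : S) : ℝ :=
  ⨅ σ₂ : {σ // IsStrat2 G σ}, prReach G σ₁ σ₂.1 T s

/-- `⟨1⟩val(Reach T)(s) = sup_{σ₁} inf_{σ₂} Pr_s^{σ₁,σ₂}(Reach T)`. -/
noncomputable def valReach (G : CGame S M) (T : Set S) (s : S) : ℝ :=
  ⨆ σ₁ : {σ // IsStrat1 G σ}, valReachUnder G σ₁.1 T s

/-- `⟨1⟩val^{σ₁}(Safe F)(s) = inf_{σ₂} Pr_s^{σ₁,σ₂}(Safe F)`. -/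
noncomputable def valSafeUnder (G : CGame S M) (σ₁ : List S → S → M → ℝ) (F : Set S)
    (s : S) : ℝ :=
  ⨅ σ₂ : {σ // IsStrat2 G σ}, prSafe G σ₁ σ₂.1 F s

/-- `⟨1⟩val(Safe F)(s) = sup_{σ₁} inf_{σ₂} Pr_s^{σ₁,σ₂}(Safe F)`. -/
noncomputable def valSafe (G : CGame S M) (F : Set S) (s : S) : ℝ :=
  ⨆ σ₁ : {σ // IsStrat1 G σ}, valSafeUnder G σ₁.1 F s

/-- `W₂ = {s | ⟨1⟩val(Reach T)(s) = 0}`. -/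
noncomputable def W2 (G : CGame S M) (T : Set S) : Set S := {s | valReach G T s = 0}

/-- `W₁ = {s | ⟨1⟩val(Safe F)(s) = 1}`. -/
noncomputable def W1 (G : CGame S M) (F : Set S) : Set S := {s | valSafe G F s = 1}

/-- A state is absorbing if for all moves the successor is the state itself. -/
def Absorbing (G : CGame S M) (s : S) : Prop := ∀ a b, G.δ s a b s = 1

/-- A player-1 strategy is proper if against every player-2 strategy, from every
state the set `T ∪ W₂` is reached with probability 1. -/
noncomputable def Proper (G : CGame S M) (T : Set S) (σ₁ : List S → S → M → ℝ) : Prop :=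
  ∀ σ₂, IsStrat2 G σ₂ → ∀ s, prReach G σ₁ σ₂ (T ∪ W2 G T) s = 1

/-- `Pre_{ξ₁,ξ₂}(v)(s)`: one-step expectation of `v` at `s` when the players use the
one-state selectors `x, y`. -/
noncomputable def preSS (G : CGame S M) (v : S → ℝ) (s : S) (x y : M → ℝ) : ℝ :=
  ∑ a : M, ∑ b : M, ∑ t : S, v t * G.δ s a b t * x a * y b

/-- `Pre_{1:ξ₁}(v)(s) = inf_{ξ₂} Pre_{ξ₁,ξ₂}(v)(s)`. -/
noncomputable def pre1Sel (G : CGame S M) (v : S → ℝ) (s : S) (x : M → ℝ) : ℝ :=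
  ⨅ y : {y : M → ℝ // IsDistOn (G.Γ₂ s) y}, preSS G v s x y.1

/-- `Pre₁(v)(s) = sup_{ξ₁} inf_{ξ₂} Pre_{ξ₁,ξ₂}(v)(s)`. -/
noncomputable def pre1 (G : CGame S M) (v : S → ℝ) (s : S) : ℝ :=
  ⨆ x : {x : M → ℝ // IsDistOn (G.Γ₁ s) x}, pre1Sel G v s x.1

/-- The value-iteration sequence: `u 0 = [T]`, `u (k+1) = Pre₁ (u k)`. -/
noncomputable def valIter (G : CGame S M) (T : Set S) : ℕ → S → ℝ
  | 0 => fun s => if s ∈ T then 1 else 0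
  | n + 1 => fun s => pre1 G (valIter G T n) s

/-- The entry time `ℓ_k(s) = min {j ≤ k | u_j(s) = u_k(s)}`. -/
noncomputable def entryTime (G : CGame S M) (T : Set S) (k : ℕ) (s : S) : ℕ :=
  sInf {j : ℕ | valIter G T j s = valIter G T k s}

/-- `dest(s,b)` under a player-1 selector `η`: possible successors of `s` when
player 1 plays `η` and player 2 plays `b`. -/
def destSet (G : CGame S M) (η : S → M → ℝ) (s : S) (b : M) : Set S :=
  {t | ∃ a, η s a ≠ 0 ∧ G.δ s a b t ≠ 0}

/-- `OptSel(v,s)`: the set of optimal one-state player-1 selectors for `v` at `s`. -/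
noncomputable def OptSel (G : CGame S M) (v : S → ℝ) (s : S) : Set (M → ℝ) :=
  {x | IsDistOn (G.Γ₁ s) x ∧ pre1Sel G v s x = pre1 G v s}

/-- `CountOpt(v,s,x)`: the set of counter-optimal player-2 moves against `x`. -/
noncomputable def countOpt (G : CGame S M) (v : S → ℝ) (s : S) (x : M → ℝ) : Finset M :=
  (G.Γ₂ s).filter fun b => preSS G v s x (pureDist b) = pre1 G v s

/-- The support of a one-state selector, as a `Finset`. -/
noncomputable def fsupp (x : M → ℝ) : Finset M := Finset.univ.filter fun a => x a ≠ 0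

/-- `OptSelCount(v,s)`: pairs `(A,B)` such that some optimal selector has support `A`
and counter-optimal action set `B`. -/
noncomputable def optSelCount (G : CGame S M) (v : S → ℝ) (s : S) :
    Set (Finset M × Finset M) :=
  {p | ∃ x ∈ OptSel G v s, fsupp x = p.1 ∧ countOpt G v s x = p.2}

/-- A selector is `k`-uniform if every probability it assigns is of the form `i/j`
with `0 ≤ i ≤ j ≤ k`. -/
def KUniform (k : ℕ) (ξ : S → M → ℝ) : Prop :=
  ∀ s a, ∃ i j : ℕ, i ≤ j ∧ j ≤ k ∧ ξ s a = (i : ℝ) / (j : ℝ)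

end CGame

/-!
Compare the game with its `lam`-discounted versions. The discounted value `v_lam` satisfies the
Bellman equation `v_lam = lam * Pre₁(v_lam)` off `T`, so a selector that is `η`-optimal in this
equation at every state makes `v_lam` strictly superharmonic for the memoryless strategy it
induces: against every opponent, this strategy reaches `T` within `n` steps with probability at
least `v_lam - lam ^ n - n * η`. Conversely, a pure best response of player 2 against the
undiscounted limit `v_1` of value iteration shows `⟨1⟩val(Reach T) ≤ v_1`, and `v_lam → v_1`
uniformly as `lam → 1` because `lam ^ k * u_k ≤ v_lam` for the `k`-th value iterate `u_k`.
-/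

open Finset Filter Topology

theorem exists_forall_iSup_sub_lt {ι : Type*} [Finite ι] {f : ℕ → ι → ℝ}
    (hf : ∀ i, Monotone (f · i)) (hb : ∀ i, BddAbove (Set.range (f · i))) {ε : ℝ}
    (hε : 0 < ε) : ∃ k, ∀ i, (⨆ n, f n i) - ε < f k i :=
  (eventually_all.2 fun i => (tendsto_atTop_ciSup (hf i) (hb i)).eventually
    (lt_mem_nhds (sub_lt_self _ hε))).exists

namespace CGame

section Distributions

variable {M : Type} [Fintype M] {A : Finset M} {y : M → ℝ}

theorem IsDistOn.le_sum_mul (hy : IsDistOn A y) {g : M → ℝ} {c : ℝ}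
    (h : ∀ b ∈ A, c ≤ g b) : c ≤ ∑ b, y b * g b := by
  obtain ⟨hy0, hyA, hy1⟩ := hy
  calc c = ∑ b, y b * c := by rw [← sum_mul, hy1, one_mul]
    _ ≤ ∑ b, y b * g b := sum_le_sum fun b _ => by
        by_cases hb : y b = 0
        · simp [hb]
        · exact mul_le_mul_of_nonneg_left (h b (hyA b hb)) (hy0 b)

theorem IsDistOn.sum_mul_le (hy : IsDistOn A y) {g : M → ℝ} {c : ℝ}
    (h : ∀ b ∈ A, g b ≤ c) : ∑ b, y b * g b ≤ c := by
  have := hy.le_sum_mul (g := fun b => -g b) (c := -c) fun b hb => neg_le_neg (h b hb)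
  simpa only [mul_neg, sum_neg_distrib, neg_le_neg_iff] using this

theorem isDistOn_pureDist {b : M} (hb : b ∈ A) : IsDistOn A (pureDist b) := by
  refine ⟨fun a => ?_, fun a ha => ?_, by simp [pureDist]⟩
  · unfold pureDist; split_ifs <;> norm_num
  · simp only [pureDist, ne_eq, ite_eq_right_iff, one_ne_zero, imp_false, not_not] at ha
    exact ha ▸ hb

theorem nonempty_isDistOn (hA : A.Nonempty) : Nonempty {x : M → ℝ // IsDistOn A x} :=
  ⟨⟨pureDist hA.choose, isDistOn_pureDist hA.choose_spec⟩⟩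

end Distributions

section OneStep

variable {S M : Type} [Fintype S] {G : CGame S M}

theorem IsGame.Γ₁_nonempty (hG : G.IsGame) (s : S) : (G.Γ₁ s).Nonempty := hG.1 s

theorem IsGame.Γ₂_nonempty (hG : G.IsGame) (s : S) : (G.Γ₂ s).Nonempty := hG.2.1 s

theorem IsGame.δ_nonneg (hG : G.IsGame) (s : S) (a b : M) (t : S) : 0 ≤ G.δ s a b t :=
  hG.2.2.1 s a b t

theorem IsGame.sum_δ (hG : G.IsGame) (s : S) (a b : M) : ∑ t, G.δ s a b t = 1 :=
  hG.2.2.2 s a b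

variable [Fintype M]

variable (G) in
noncomputable def nextExp (v : S → ℝ) (s : S) (x : M → ℝ) (b : M) : ℝ :=
  ∑ a, ∑ t, x a * G.δ s a b t * v t

variable {v w : S → ℝ} {s : S} {x : M → ℝ} {b : M}

theorem nextExp_nonneg (hG : G.IsGame) (hx : ∀ a, 0 ≤ x a) (hv : 0 ≤ v) :
    0 ≤ nextExp G v s x b :=
  sum_nonneg fun a _ => sum_nonneg fun t _ =>
    mul_nonneg (mul_nonneg (hx a) (hG.δ_nonneg s a b t)) (hv t)

theorem nextExp_mono (hG : G.IsGame) (hx : ∀ a, 0 ≤ x a) (hvw : v ≤ w) :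
    nextExp G v s x b ≤ nextExp G w s x b :=
  sum_le_sum fun a _ => sum_le_sum fun t _ =>
    mul_le_mul_of_nonneg_left (hvw t) (mul_nonneg (hx a) (hG.δ_nonneg s a b t))

theorem nextExp_add_const (hG : G.IsGame) (hx : ∑ a, x a = 1) (c : ℝ) :
    nextExp G (fun t => v t + c) s x b = nextExp G v s x b + c := by
  have hsum : ∀ a, ∑ t, x a * G.δ s a b t * c = x a * c := fun a => by
    rw [← sum_mul, ← mul_sum, hG.sum_δ, mul_one]
  simp only [nextExp, mul_add, sum_add_distrib, hsum, ← sum_mul, hx, one_mul]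

theorem nextExp_const_mul (c : ℝ) :
    nextExp G (fun t => c * v t) s x b = c * nextExp G v s x b := by
  simp only [nextExp, mul_sum]
  exact sum_congr rfl fun a _ => sum_congr rfl fun t _ => by ring

theorem nextExp_le_of_le (hG : G.IsGame) (hx : IsDistOn A x) {c : ℝ} (hv : ∀ t, v t ≤ c) :
    nextExp G v s x b ≤ c := by
  have h := nextExp_mono hG hx.1 (s := s) (b := b)
    (show v ≤ fun _ => (fun _ => 0) s + c from fun t => by simpa using hv t)
  rw [nextExp_add_const hG hx.2.2] at h
  simpa [nextExp] using h

variable (G) in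
noncomputable def guarantee (v : S → ℝ) (s : S) (x : M → ℝ) : ℝ :=
  if h : (G.Γ₂ s).Nonempty then (G.Γ₂ s).inf' h (nextExp G v s x) else 0

theorem guarantee_le_nextExp (hG : G.IsGame) (hb : b ∈ G.Γ₂ s) :
    guarantee G v s x ≤ nextExp G v s x b := by
  rw [guarantee, dif_pos (hG.Γ₂_nonempty s)]
  exact inf'_le _ hb

theorem le_guarantee (hG : G.IsGame) {c : ℝ} (h : ∀ b ∈ G.Γ₂ s, c ≤ nextExp G v s x b) :
    c ≤ guarantee G v s x := by
  rw [guarantee, dif_pos (hG.Γ₂_nonempty s)]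
  exact le_inf' _ _ h

theorem exists_nextExp_eq_guarantee (hG : G.IsGame) (v : S → ℝ) (s : S) (x : M → ℝ) :
    ∃ b ∈ G.Γ₂ s, nextExp G v s x b = guarantee G v s x := by
  rw [guarantee, dif_pos (hG.Γ₂_nonempty s)]
  obtain ⟨b, hb, he⟩ := exists_mem_eq_inf' (hG.Γ₂_nonempty s) (nextExp G v s x)
  exact ⟨b, hb, he.symm⟩

theorem guarantee_nonneg (hG : G.IsGame) (hx : ∀ a, 0 ≤ x a) (hv : 0 ≤ v) :
    0 ≤ guarantee G v s x :=
  le_guarantee hG fun _ _ => nextExp_nonneg hG hx hv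

theorem guarantee_le_of_le (hG : G.IsGame) (hx : IsDistOn A x) {c : ℝ} (hv : ∀ t, v t ≤ c) :
    guarantee G v s x ≤ c := by
  obtain ⟨b, -, hb⟩ := exists_nextExp_eq_guarantee hG v s x
  exact hb ▸ nextExp_le_of_le hG hx hv

theorem guarantee_mono (hG : G.IsGame) (hx : ∀ a, 0 ≤ x a) (hvw : v ≤ w) :
    guarantee G v s x ≤ guarantee G w s x :=
  le_guarantee hG fun _ hb => (guarantee_le_nextExp hG hb).trans (nextExp_mono hG hx hvw)

theorem guarantee_le_add_of_le_add (hG : G.IsGame) (hx : IsDistOn A x) {c : ℝ}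
    (hvw : ∀ t, v t ≤ w t + c) : guarantee G v s x ≤ guarantee G w s x + c := by
  obtain ⟨b, hb, hbw⟩ := exists_nextExp_eq_guarantee hG w s x
  calc guarantee G v s x ≤ nextExp G v s x b := guarantee_le_nextExp hG hb
    _ ≤ nextExp G (fun t => w t + c) s x b := nextExp_mono hG hx.1 hvw
    _ = guarantee G w s x + c := by rw [nextExp_add_const hG hx.2.2, hbw]

theorem guarantee_const_mul (hG : G.IsGame) {c : ℝ} (hc : 0 ≤ c) :
    guarantee G (fun t => c * v t) s x = c * guarantee G v s x := by
  obtain ⟨b, hb, hbv⟩ := exists_nextExp_eq_guarantee hG v s x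
  refine le_antisymm ?_ (le_guarantee hG fun b' hb' => ?_)
  · calc guarantee G (fun t => c * v t) s x ≤ nextExp G (fun t => c * v t) s x b :=
          guarantee_le_nextExp hG hb
      _ = c * guarantee G v s x := by rw [nextExp_const_mul, hbv]
  · rw [nextExp_const_mul]
    exact mul_le_mul_of_nonneg_left (guarantee_le_nextExp hG hb') hc

variable (G) in
/-- `pre1 G v s` with player 2 restricted to pure moves, which costs player 2 nothing since
`preSS` is linear in player 2's distribution. -/
noncomputable def optGuarantee (v : S → ℝ) (s : S) : ℝ :=
  ⨆ x : {x : M → ℝ // IsDistOn (G.Γ₁ s) x}, guarantee G v s x.1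

theorem bddAbove_range_guarantee (hG : G.IsGame) (v : S → ℝ) (s : S) :
    BddAbove (Set.range fun x : {x : M → ℝ // IsDistOn (G.Γ₁ s) x} => guarantee G v s x.1) :=
  ⟨∑ t, |v t|, Set.forall_mem_range.2 fun x => guarantee_le_of_le hG x.2 fun t =>
    (le_abs_self (v t)).trans (single_le_sum (fun t _ => abs_nonneg (v t)) (mem_univ t))⟩

theorem guarantee_le_optGuarantee (hG : G.IsGame) (hx : IsDistOn (G.Γ₁ s) x) :
    guarantee G v s x ≤ optGuarantee G v s :=
  le_ciSup (bddAbove_range_guarantee hG v s) ⟨x, hx⟩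

theorem optGuarantee_le (hG : G.IsGame) {c : ℝ}
    (h : ∀ x, IsDistOn (G.Γ₁ s) x → guarantee G v s x ≤ c) : optGuarantee G v s ≤ c :=
  have := nonempty_isDistOn (hG.Γ₁_nonempty s)
  ciSup_le fun x => h x.1 x.2

theorem exists_isDistOn_optGuarantee_lt (hG : G.IsGame) (v : S → ℝ) (s : S) {η : ℝ}
    (hη : 0 < η) :
    ∃ x, IsDistOn (G.Γ₁ s) x ∧ optGuarantee G v s < guarantee G v s x + η := by
  have := nonempty_isDistOn (hG.Γ₁_nonempty s)
  obtain ⟨x, hx⟩ := exists_lt_of_lt_ciSup (sub_lt_self (optGuarantee G v s) hη)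
  exact ⟨x.1, x.2, sub_lt_iff_lt_add.1 hx⟩

theorem optGuarantee_nonneg (hG : G.IsGame) (hv : 0 ≤ v) (s : S) : 0 ≤ optGuarantee G v s :=
  have hx := isDistOn_pureDist (hG.Γ₁_nonempty s).choose_spec
  (guarantee_nonneg hG hx.1 hv).trans (guarantee_le_optGuarantee hG hx)

theorem optGuarantee_le_of_le (hG : G.IsGame) {c : ℝ} (hv : ∀ t, v t ≤ c) (s : S) :
    optGuarantee G v s ≤ c :=
  optGuarantee_le hG fun _ hx => guarantee_le_of_le hG hx hv

theorem optGuarantee_mono (hG : G.IsGame) (hvw : v ≤ w) (s : S) :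
    optGuarantee G v s ≤ optGuarantee G w s :=
  optGuarantee_le hG fun _ hx => (guarantee_mono hG hx.1 hvw).trans
    (guarantee_le_optGuarantee hG hx)

theorem optGuarantee_le_add_of_le_add (hG : G.IsGame) {c : ℝ} (hvw : ∀ t, v t ≤ w t + c)
    (s : S) : optGuarantee G v s ≤ optGuarantee G w s + c :=
  optGuarantee_le hG fun _ hx => (guarantee_le_add_of_le_add hG hx hvw).trans
    (add_le_add_left (guarantee_le_optGuarantee hG hx) c)

theorem optGuarantee_const_mul (hG : G.IsGame) {c : ℝ} (hc : 0 ≤ c) (v : S → ℝ) (s : S) :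
    optGuarantee G (fun t => c * v t) s = c * optGuarantee G v s := by
  simp only [optGuarantee, guarantee_const_mul hG hc, Real.mul_iSup_of_nonneg hc]

end OneStep

section Discounted

variable {S M : Type} [Fintype S] [Fintype M] {G : CGame S M} {T : Set S} {lam : ℝ}

variable (G) in
/-- Unlike `valIter`, this keeps the value `1` on `T`; `discIter G T 1` is value iteration
for `Reach T`. -/
noncomputable def discIter (T : Set S) (lam : ℝ) : ℕ → S → ℝ
  | 0 => fun s => if s ∈ T then 1 else 0
  | n + 1 => fun s => if s ∈ T then 1 else lam * optGuarantee G (discIter T lam n) s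

variable (G) in
noncomputable def discVal (T : Set S) (lam : ℝ) (s : S) : ℝ :=
  ⨆ n, discIter G T lam n s

theorem discIter_of_mem {s : S} (hs : s ∈ T) (n : ℕ) : discIter G T lam n s = 1 := by
  cases n <;> simp [discIter, hs]

theorem discIter_of_not_mem {s : S} (hs : s ∉ T) (n : ℕ) :
    discIter G T lam (n + 1) s = lam * optGuarantee G (discIter G T lam n) s := by
  simp [discIter, hs]

theorem discIter_nonneg (hG : G.IsGame) (h0 : 0 ≤ lam) (n : ℕ) : 0 ≤ discIter G T lam n := by
  induction n with
  | zero => intro s; simp only [discIter]; split_ifs <;> norm_num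
  | succ n ih =>
    intro s
    by_cases hs : s ∈ T
    · simp [discIter_of_mem hs]
    · simpa [discIter_of_not_mem hs] using mul_nonneg h0 (optGuarantee_nonneg hG ih s)

theorem discIter_le_one (hG : G.IsGame) (h0 : 0 ≤ lam) (h1 : lam ≤ 1) (n : ℕ) (s : S) :
    discIter G T lam n s ≤ 1 := by
  induction n generalizing s with
  | zero => simp only [discIter]; split_ifs <;> norm_num
  | succ n ih =>
    by_cases hs : s ∈ T
    · simp [discIter_of_mem hs]
    · rw [discIter_of_not_mem hs]
      exact mul_le_one₀ h1 (optGuarantee_nonneg hG (discIter_nonneg hG h0 n) s)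
        (optGuarantee_le_of_le hG ih s)

theorem discIter_le_succ (hG : G.IsGame) (h0 : 0 ≤ lam) (n : ℕ) :
    discIter G T lam n ≤ discIter G T lam (n + 1) := by
  induction n with
  | zero =>
    intro s
    by_cases hs : s ∈ T
    · simp [discIter_of_mem hs]
    · simpa [discIter_of_not_mem hs, discIter, hs] using
        mul_nonneg h0 (optGuarantee_nonneg hG (discIter_nonneg hG h0 0) s)
  | succ n ih =>
    intro s
    by_cases hs : s ∈ T
    · simp [discIter_of_mem hs]
    · simp only [discIter_of_not_mem hs]
      exact mul_le_mul_of_nonneg_left (optGuarantee_mono hG ih s) h0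

theorem bddAbove_range_discIter (hG : G.IsGame) (h0 : 0 ≤ lam) (h1 : lam ≤ 1) (s : S) :
    BddAbove (Set.range fun n => discIter G T lam n s) :=
  ⟨1, Set.forall_mem_range.2 fun n => discIter_le_one hG h0 h1 n s⟩

theorem discIter_le_discVal (hG : G.IsGame) (h0 : 0 ≤ lam) (h1 : lam ≤ 1) (n : ℕ) (s : S) :
    discIter G T lam n s ≤ discVal G T lam s :=
  le_ciSup (bddAbove_range_discIter hG h0 h1 s) n

theorem discVal_of_mem {s : S} (hs : s ∈ T) : discVal G T lam s = 1 := by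
  simp [discVal, discIter_of_mem hs]

theorem discVal_nonneg (hG : G.IsGame) (h0 : 0 ≤ lam) : 0 ≤ discVal G T lam := fun s =>
  Real.iSup_nonneg fun n => discIter_nonneg hG h0 n s

theorem discVal_le_one (hG : G.IsGame) (h0 : 0 ≤ lam) (h1 : lam ≤ 1) (s : S) :
    discVal G T lam s ≤ 1 :=
  ciSup_le fun n => discIter_le_one hG h0 h1 n s

theorem exists_discIter_approx (hG : G.IsGame) (h0 : 0 ≤ lam) (h1 : lam ≤ 1) {ε : ℝ}
    (hε : 0 < ε) : ∃ k, ∀ s, discVal G T lam s - ε < discIter G T lam k s :=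
  exists_forall_iSup_sub_lt (fun s => monotone_nat_of_le_succ fun n => discIter_le_succ hG h0 n s)
    (bddAbove_range_discIter hG h0 h1) hε

theorem discVal_eq (hG : G.IsGame) (h0 : 0 ≤ lam) (h1 : lam ≤ 1) {s : S} (hs : s ∉ T) :
    discVal G T lam s = lam * optGuarantee G (discVal G T lam) s := by
  refine le_antisymm (ciSup_le fun n => ?_) (le_of_forall_pos_le_add fun ε hε => ?_)
  · cases n with
    | zero =>
      simpa [discIter, hs] using mul_nonneg h0 (optGuarantee_nonneg hG (discVal_nonneg hG h0) s)
    | succ n =>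
      rw [discIter_of_not_mem hs]
      exact mul_le_mul_of_nonneg_left
        (optGuarantee_mono hG (fun t => discIter_le_discVal hG h0 h1 n t) s) h0
  · obtain ⟨k, hk⟩ := exists_discIter_approx hG h0 h1 hε (T := T)
    have hshift := optGuarantee_le_add_of_le_add hG (fun t => (sub_lt_iff_lt_add.1 (hk t)).le) s
    calc lam * optGuarantee G (discVal G T lam) s
        ≤ lam * (optGuarantee G (discIter G T lam k) s + ε) := mul_le_mul_of_nonneg_left hshift h0
      _ ≤ discIter G T lam (k + 1) s + ε := by
        rw [discIter_of_not_mem hs, mul_add]; gcongr; exact mul_le_of_le_one_left hε.le h1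
      _ ≤ discVal G T lam s + ε := by gcongr; exact discIter_le_discVal hG h0 h1 _ s

theorem pow_mul_discIter_one_le (hG : G.IsGame) (h0 : 0 ≤ lam) (h1 : lam ≤ 1) (n : ℕ) (s : S) :
    lam ^ n * discIter G T 1 n s ≤ discIter G T lam n s := by
  induction n generalizing s with
  | zero => simp [discIter]
  | succ n ih =>
    by_cases hs : s ∈ T
    · simpa [discIter_of_mem hs] using pow_le_one₀ h0 h1
    · rw [discIter_of_not_mem hs, discIter_of_not_mem hs, one_mul, pow_succ', mul_assoc,
        ← optGuarantee_const_mul hG (pow_nonneg h0 n)]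
      exact mul_le_mul_of_nonneg_left (optGuarantee_mono hG ih s) h0

theorem exists_discVal_approx_one (hG : G.IsGame) (T : Set S) {ε : ℝ} (hε : 0 < ε) :
    ∃ lam, 0 < lam ∧ lam < 1 ∧ ∀ s, discVal G T 1 s - ε ≤ discVal G T lam s := by
  obtain ⟨k, hk⟩ := exists_discIter_approx hG zero_le_one le_rfl (half_pos hε) (T := T)
  have hpow : ∀ᶠ lam in 𝓝[<] (1 : ℝ), 1 - ε / 2 < lam ^ k := by
    refine eventually_nhdsWithin_of_eventually_nhds
      (((continuous_pow k).tendsto 1).eventually (lt_mem_nhds ?_))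
    simpa using half_pos hε
  obtain ⟨lam, hlam, hlam0, hlam1⟩ :=
    (hpow.and ((eventually_nhdsWithin_of_eventually_nhds (lt_mem_nhds zero_lt_one)).and
      self_mem_nhdsWithin)).exists
  refine ⟨lam, hlam0, hlam1, fun s => ?_⟩
  have hd : lam ^ k * discIter G T 1 k s ≤ discVal G T lam s :=
    (pow_mul_discIter_one_le hG hlam0.le hlam1.le k s).trans
      (discIter_le_discVal hG hlam0.le hlam1.le k s)
  have hd1 := mul_le_mul_of_nonneg_left (discIter_le_one hG zero_le_one le_rfl k s (T := T))
    (sub_nonneg.2 (pow_le_one₀ hlam0.le hlam1.le) : 0 ≤ 1 - lam ^ k)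
  linarith [hk s]

end Discounted

section Plays

variable {S M : Type} [Fintype M] {G : CGame S M}

theorem IsSel1.isStrat1_ml {ξ : S → M → ℝ} (hξ : IsSel1 G ξ) : IsStrat1 G (ml ξ) :=
  fun _ s => hξ s

variable [Fintype S]

theorem nonempty_isStrat1 (hG : G.IsGame) : Nonempty {σ // IsStrat1 G σ} :=
  ⟨⟨fun _ s => pureDist (hG.Γ₁_nonempty s).choose,
    fun _ s => isDistOn_pureDist (hG.Γ₁_nonempty s).choose_spec⟩⟩

theorem nonempty_isStrat2 (hG : G.IsGame) : Nonempty {σ // IsStrat2 G σ} :=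
  ⟨⟨fun _ s => pureDist (hG.Γ₂_nonempty s).choose,
    fun _ s => isDistOn_pureDist (hG.Γ₂_nonempty s).choose_spec⟩⟩

variable {T : Set S} {σ₁ σ₂ : List S → S → M → ℝ} {n : ℕ} {w : List S} {s : S}

theorem reachW_succ_of_mem (hs : s ∈ T) : reachW G σ₁ σ₂ T (n + 1) w s = 1 := by
  simp [reachW, hs]

theorem reachW_succ_of_not_mem (hs : s ∉ T) :
    reachW G σ₁ σ₂ T (n + 1) w s =
      ∑ b, σ₂ w s b * nextExp G (reachW G σ₁ σ₂ T n (w ++ [s])) s (σ₁ w s) b := by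
  rw [reachW, if_neg hs, sum_comm]
  simp only [nextExp, mul_sum]
  exact sum_congr rfl fun b _ => sum_congr rfl fun a _ => sum_congr rfl fun t _ => by ring

theorem reachW_nonneg (hG : G.IsGame) (hσ₁ : IsStrat1 G σ₁) (hσ₂ : IsStrat2 G σ₂) (n : ℕ)
    (w : List S) (s : S) : 0 ≤ reachW G σ₁ σ₂ T n w s := by
  induction n generalizing w s with
  | zero => simp only [reachW]; split_ifs <;> norm_num
  | succ n ih =>
    by_cases hs : s ∈ T
    · simp [reachW_succ_of_mem hs]
    · rw [reachW_succ_of_not_mem hs]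
      exact sum_nonneg fun b _ =>
        mul_nonneg ((hσ₂ w s).1 b) (nextExp_nonneg hG (hσ₁ w s).1 (ih (w ++ [s])))

theorem reachW_le_one (hG : G.IsGame) (hσ₁ : IsStrat1 G σ₁) (hσ₂ : IsStrat2 G σ₂) (n : ℕ)
    (w : List S) (s : S) : reachW G σ₁ σ₂ T n w s ≤ 1 := by
  induction n generalizing w s with
  | zero => simp only [reachW]; split_ifs <;> norm_num
  | succ n ih =>
    by_cases hs : s ∈ T
    · simp [reachW_succ_of_mem hs]
    · rw [reachW_succ_of_not_mem hs]
      exact (hσ₂ w s).sum_mul_le fun b _ => nextExp_le_of_le hG (hσ₁ w s) (ih (w ++ [s]))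

theorem reachW_le_prReach (hG : G.IsGame) (hσ₁ : IsStrat1 G σ₁) (hσ₂ : IsStrat2 G σ₂)
    (n : ℕ) (s : S) : reachW G σ₁ σ₂ T n [] s ≤ prReach G σ₁ σ₂ T s :=
  le_ciSup ⟨1, Set.forall_mem_range.2 fun n => reachW_le_one hG hσ₁ hσ₂ n [] s⟩ n

theorem prReach_nonneg (hG : G.IsGame) (hσ₁ : IsStrat1 G σ₁) (hσ₂ : IsStrat2 G σ₂) (s : S) :
    0 ≤ prReach G σ₁ σ₂ T s :=
  Real.iSup_nonneg fun n => reachW_nonneg hG hσ₁ hσ₂ n [] s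

/-- Player 2 answers every history with a pure move that is worst for player 1 against the
undiscounted value `discVal G T 1`; the Bellman equation keeps the reach probabilities below it. -/
theorem exists_isStrat2_reachW_le_discVal (hG : G.IsGame) (T : Set S) (hσ₁ : IsStrat1 G σ₁) :
    ∃ σ₂, IsStrat2 G σ₂ ∧ ∀ n w s, reachW G σ₁ σ₂ T n w s ≤ discVal G T 1 s := by
  choose b hb hbv using fun w s => exists_nextExp_eq_guarantee hG (discVal G T 1) s (σ₁ w s)
  have hσ₂ : IsStrat2 G fun w s => pureDist (b w s) := fun w s => isDistOn_pureDist (hb w s)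
  refine ⟨_, hσ₂, fun n => ?_⟩
  induction n with
  | zero =>
    intro w s
    by_cases hs : s ∈ T
    · simp [reachW, hs, discVal_of_mem hs]
    · simpa [reachW, hs] using discVal_nonneg hG zero_le_one s
  | succ n ih =>
    intro w s
    by_cases hs : s ∈ T
    · rw [discVal_of_mem hs]
      exact reachW_le_one hG hσ₁ hσ₂ _ w s
    · rw [reachW_succ_of_not_mem hs]
      simp only [pureDist, ite_mul, one_mul, zero_mul, sum_ite_eq', mem_univ, if_true]
      calc nextExp G (reachW G σ₁ _ T n (w ++ [s])) s (σ₁ w s) (b w s)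
          ≤ nextExp G (discVal G T 1) s (σ₁ w s) (b w s) :=
            nextExp_mono hG (hσ₁ w s).1 (ih (w ++ [s]))
        _ ≤ optGuarantee G (discVal G T 1) s :=
            hbv w s ▸ guarantee_le_optGuarantee hG (hσ₁ w s)
        _ = discVal G T 1 s := by rw [discVal_eq hG zero_le_one le_rfl hs, one_mul]

theorem valReach_le_discVal (hG : G.IsGame) (T : Set S) (s : S) :
    valReach G T s ≤ discVal G T 1 s := by
  have := nonempty_isStrat1 hG
  refine ciSup_le fun σ₁ => ?_
  obtain ⟨σ₂, hσ₂, hle⟩ := exists_isStrat2_reachW_le_discVal hG T σ₁.2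
  have hbdd : BddBelow (Set.range fun σ : {σ // IsStrat2 G σ} => prReach G σ₁.1 σ.1 T s) :=
    ⟨0, Set.forall_mem_range.2 fun σ => prReach_nonneg hG σ₁.2 σ.2 s⟩
  exact (ciInf_le hbdd ⟨σ₂, hσ₂⟩).trans
    (Real.iSup_le (fun n => hle n [] s) (discVal_nonneg hG zero_le_one s))

variable {lam η : ℝ} {v : S → ℝ} {ξ : S → M → ℝ}

/-- When `v s ≥ lam ^ (n + 1)`, the discount gap `(1 - lam) * (v s - lam ^ (n + 1))` absorbs
the loss of one step; otherwise the bound is negative. -/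
theorem sub_le_reachW_ml (hG : G.IsGame) (h0 : 0 < lam) (h1 : lam ≤ 1) (hη : 0 ≤ η)
    (hv : ∀ t, v t ≤ 1) (hξ : IsSel1 G ξ)
    (hcert : ∀ s ∉ T, v s ≤ lam * (guarantee G v s (ξ s) + η)) (hσ₂ : IsStrat2 G σ₂)
    (n : ℕ) (w : List S) (s : S) : v s - lam ^ n - n * η ≤ reachW G (ml ξ) σ₂ T n w s := by
  have hσ₁ := hξ.isStrat1_ml
  induction n generalizing w s with
  | zero =>
    simp only [pow_zero, CharP.cast_eq_zero, zero_mul, sub_zero]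
    linarith [hv s, reachW_nonneg hG hσ₁ hσ₂ 0 w s (T := T)]
  | succ n ih =>
    have hpow := pow_nonneg h0.le (n + 1)
    have hnη : 0 ≤ ((n + 1 : ℕ) : ℝ) * η := by positivity
    by_cases hs : s ∈ T
    · rw [reachW_succ_of_mem hs]
      linarith [hv s]
    rcases lt_or_ge (v s) (lam ^ (n + 1)) with hlt | hge
    · linarith [reachW_nonneg hG hσ₁ hσ₂ (n + 1) w s (T := T)]
    set g := guarantee G v s (ξ s)
    have hstep : g - (lam ^ n + n * η) ≤ reachW G (ml ξ) σ₂ T (n + 1) w s := by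
      rw [reachW_succ_of_not_mem hs, ml]
      refine (hσ₂ w s).le_sum_mul fun b hb => ?_
      have hmono := nextExp_mono hG (hξ s).1 (s := s) (b := b)
        (show (fun t => v t + -(lam ^ n + n * η)) ≤ reachW G (ml ξ) σ₂ T n (w ++ [s]) from
          fun t => by linarith [ih (w ++ [s]) t])
      rw [nextExp_add_const hG (hξ s).2.2] at hmono
      linarith [guarantee_le_nextExp hG hb (v := v) (x := ξ s)]
    have hgap := mul_nonneg (sub_nonneg.2 h1) (sub_nonneg.2 hge)
    have hscaled : lam * (v s - lam ^ (n + 1) - η) ≤ lam * (g - lam ^ n) := by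
      rw [pow_succ] at hgap ⊢
      nlinarith [hcert s hs]
    push_cast
    linarith [le_of_mul_le_mul_left hscaled h0]

theorem sub_le_valReachUnder_ml (hG : G.IsGame) (h0 : 0 < lam) (h1 : lam ≤ 1) (hη : 0 ≤ η)
    (hv : ∀ t, v t ≤ 1) (hξ : IsSel1 G ξ)
    (hcert : ∀ s ∉ T, v s ≤ lam * (guarantee G v s (ξ s) + η)) (n : ℕ) (s : S) :
    v s - lam ^ n - n * η ≤ valReachUnder G (ml ξ) T s :=
  have := nonempty_isStrat2 hG
  le_ciInf fun σ₂ => (sub_le_reachW_ml hG h0 h1 hη hv hξ hcert σ₂.2 n [] s).trans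
    (reachW_le_prReach hG hξ.isStrat1_ml σ₂.2 n s)

end Plays

end CGame

theorem memoryless_eps_optimal_reach_general
    {S M : Type} [Fintype S] [Fintype M]
    (G : CGame S M) (hG : G.IsGame) (T : Set S) (ε : ℝ) (hε : 0 < ε) :
    ∃ ξ : S → M → ℝ, CGame.IsSel1 G ξ ∧
      ∀ s : S, CGame.valReach G T s - ε ≤ CGame.valReachUnder G (CGame.ml ξ) T s := by
  obtain ⟨lam, hlam0, hlam1, hlam⟩ := CGame.exists_discVal_approx_one hG T (half_pos hε)
  obtain ⟨N, hN⟩ := exists_pow_lt_of_lt_one (by positivity : 0 < ε / 4) hlam1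
  set η := ε / (4 * (N + 1)) with hη_def
  have hη : 0 < η := by positivity
  have hNη : N * η ≤ ε / 4 := by
    rw [hη_def, mul_div_assoc', div_le_div_iff₀ (by positivity) (by positivity)]
    nlinarith
  choose ξ hξ hopt using fun s =>
    CGame.exists_isDistOn_optGuarantee_lt hG (CGame.discVal G T lam) s hη
  have hcert : ∀ s ∉ T, CGame.discVal G T lam s ≤
      lam * (CGame.guarantee G (CGame.discVal G T lam) s (ξ s) + η) := fun s hs => by
    rw [CGame.discVal_eq hG hlam0.le hlam1.le hs]
    exact mul_le_mul_of_nonneg_left (hopt s).le hlam0.le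
  refine ⟨ξ, hξ, fun s => ?_⟩
  have hlow := CGame.sub_le_valReachUnder_ml hG hlam0 hlam1.le hη.le
    (CGame.discVal_le_one hG hlam0.le hlam1.le) hξ hcert N s
  linarith [CGame.valReach_le_discVal hG T s, hlam s]

/-- **Memoryless ε-optimal strategies for concurrent reachability games.**
For every concurrent game structure `G` with target set `T` and every `ε > 0`,
there is a player-1 selector `ξ` (inducing the memoryless strategy `ml ξ`) such
that for every state `s`, `inf_{σ₂} Pr_s^{ml ξ, σ₂}(Reach T) ≥ ⟨1⟩val(Reach T)(s) − ε`. -/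
theorem memoryless_eps_optimal_reach
    {S M : Type} [Fintype S] [DecidableEq S] [Fintype M] [DecidableEq M]
    (G : CGame S M) (hG : G.IsGame) (T : Set S) (ε : ℝ) (hε : 0 < ε) :
    ∃ ξ : S → M → ℝ, CGame.IsSel1 G ξ ∧
      ∀ s : S, CGame.valReach G T s - ε ≤ CGame.valReachUnder G (CGame.ml ξ) T s :=
  memoryless_eps_optimal_reach_general G hG T ε hε
end

section
/- Given a player-1 selector ξ₁ in a concurrent game structure with target set T (where all states of T ∪ W₂ are absorbing), the memoryless player-1 strategy ξ̄₁ is proper if and only if for every pure selector ξ₂ for player 2 and all states s ∈ S, Pr_s^{ξ̄₁,ξ̄₂}(Reach(T ∪ W₂)) = 1. -/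
open scoped Classical

set_option linter.unusedVariables false

namespace CGame

variable {S M : Type} [Fintype S] [DecidableEq S] [Fintype M] [DecidableEq M]

set_option linter.unusedSectionVars false
section aux
variable (G : CGame S M) (U : Set S) (σ₁ σ₂ : List S → S → M → ℝ)

lemma reachW_mem {s : S} (hs : s ∈ U) (n : ℕ) (w : List S) :
    reachW G σ₁ σ₂ U n w s = 1 := by cases n <;> simp [reachW, hs]

variable (hG : G.IsGame) (h₁ : IsStrat1 G σ₁) (h₂ : IsStrat2 G σ₂)
include hG h₁ h₂

lemma reachW_nonneg_s2 (n : ℕ) : ∀ w s, 0 ≤ reachW G σ₁ σ₂ U n w s := by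
  induction n with
  | zero => intro w s; simp only [reachW]; split <;> norm_num
  | succ n ih =>
    intro w s
    simp only [reachW]; split
    · norm_num
    · refine Finset.sum_nonneg fun a _ => Finset.sum_nonneg fun b _ =>
        Finset.sum_nonneg fun t _ => ?_
      exact mul_nonneg (mul_nonneg (mul_nonneg ((h₁ w s).1 a) ((h₂ w s).1 b))
        (hG.2.2.1 s a b t)) (ih _ t)

lemma coeff_sum_one (w : List S) (s : S) :
    ∑ a : M, ∑ b : M, ∑ t : S, σ₁ w s a * σ₂ w s b * G.δ s a b t = 1 := by
  have : ∀ a b, ∑ t : S, σ₁ w s a * σ₂ w s b * G.δ s a b t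
      = σ₁ w s a * σ₂ w s b := by
    intro a b
    rw [← Finset.mul_sum, hG.2.2.2 s a b, mul_one]
  simp only [this, ← Finset.mul_sum, (h₂ w s).2.2, mul_one, (h₁ w s).2.2]

lemma reachW_le_one_s2 (n : ℕ) : ∀ w s, reachW G σ₁ σ₂ U n w s ≤ 1 := by
  induction n with
  | zero => intro w s; simp only [reachW]; split <;> norm_num
  | succ n ih =>
    intro w s
    simp only [reachW]; split
    · norm_num
    · calc (∑ a : M, ∑ b : M, ∑ t : S,
            σ₁ w s a * σ₂ w s b * G.δ s a b t * reachW G σ₁ σ₂ U n (w ++ [s]) t)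
          ≤ ∑ a : M, ∑ b : M, ∑ t : S, σ₁ w s a * σ₂ w s b * G.δ s a b t := by
            refine Finset.sum_le_sum fun a _ => Finset.sum_le_sum fun b _ =>
              Finset.sum_le_sum fun t _ => ?_
            have hc : 0 ≤ σ₁ w s a * σ₂ w s b * G.δ s a b t :=
              mul_nonneg (mul_nonneg ((h₁ w s).1 a) ((h₂ w s).1 b)) (hG.2.2.1 s a b t)
            calc σ₁ w s a * σ₂ w s b * G.δ s a b t * reachW G σ₁ σ₂ U n (w ++ [s]) t
                ≤ σ₁ w s a * σ₂ w s b * G.δ s a b t * 1 :=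
                  mul_le_mul_of_nonneg_left (ih _ t) hc
              _ = _ := mul_one _
        _ = 1 := coeff_sum_one G σ₁ σ₂ hG h₁ h₂ w s

lemma reachW_succ_le (n : ℕ) :
    ∀ w s, reachW G σ₁ σ₂ U n w s ≤ reachW G σ₁ σ₂ U (n + 1) w s := by
  induction n with
  | zero =>
    intro w s
    by_cases hs : s ∈ U
    · simp [reachW_mem, hs]
    · simp only [reachW, if_neg hs]
      refine Finset.sum_nonneg fun a _ => Finset.sum_nonneg fun b _ =>
        Finset.sum_nonneg fun t _ => ?_
      refine mul_nonneg (mul_nonneg (mul_nonneg ((h₁ w s).1 a) ((h₂ w s).1 b))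
        (hG.2.2.1 s a b t)) ?_
      exact reachW_nonneg_s2 G U σ₁ σ₂ hG h₁ h₂ 0 (w ++ [s]) t
  | succ n ih =>
    intro w s
    by_cases hs : s ∈ U
    · simp [reachW_mem, hs]
    · simp only [reachW, if_neg hs]
      refine Finset.sum_le_sum fun a _ => Finset.sum_le_sum fun b _ =>
        Finset.sum_le_sum fun t _ => ?_
      have hc : 0 ≤ σ₁ w s a * σ₂ w s b * G.δ s a b t :=
        mul_nonneg (mul_nonneg ((h₁ w s).1 a) ((h₂ w s).1 b)) (hG.2.2.1 s a b t)
      exact mul_le_mul_of_nonneg_left (ih _ t) hc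

lemma reachW_mono {m n : ℕ} (h : m ≤ n) (w : List S) (s : S) :
    reachW G σ₁ σ₂ U m w s ≤ reachW G σ₁ σ₂ U n w s := by
  induction h with
  | refl => exact le_refl _
  | step h ih => exact le_trans ih (reachW_succ_le G U σ₁ σ₂ hG h₁ h₂ _ w s)


lemma one_sub_sum (w : List S) (s : S) (r : S → ℝ) :
    1 - (∑ a : M, ∑ b : M, ∑ t : S, σ₁ w s a * σ₂ w s b * G.δ s a b t * r t)
      = ∑ a : M, ∑ b : M, ∑ t : S, σ₁ w s a * σ₂ w s b * G.δ s a b t * (1 - r t) := by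
  have h := coeff_sum_one G σ₁ σ₂ hG h₁ h₂ w s
  rw [eq_comm]
  simp only [mul_sub, mul_one, Finset.sum_sub_distrib, h]

lemma reachW_compose {β : ℝ} (hβ : 0 ≤ β) {m : ℕ}
    (hm : ∀ w t, 1 - reachW G σ₁ σ₂ U m w t ≤ β) (n : ℕ) :
    ∀ w s, 1 - reachW G σ₁ σ₂ U (n + m) w s ≤ (1 - reachW G σ₁ σ₂ U n w s) * β := by
  induction n with
  | zero =>
    intro w s
    by_cases hs : s ∈ U
    · simp [reachW_mem, hs]
    · have : reachW G σ₁ σ₂ U 0 w s = 0 := by simp [reachW, hs]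
      rw [Nat.zero_add, this, sub_zero, one_mul]
      exact hm w s
  | succ n ih =>
    intro w s
    by_cases hs : s ∈ U
    · simp [reachW_mem, hs]
    · have hnm : n + 1 + m = (n + m) + 1 := by omega
      rw [hnm]
      simp only [reachW, if_neg hs]
      rw [one_sub_sum G σ₁ σ₂ hG h₁ h₂, one_sub_sum G σ₁ σ₂ hG h₁ h₂]
      simp only [Finset.sum_mul]
      refine Finset.sum_le_sum fun a _ => Finset.sum_le_sum fun b _ =>
        Finset.sum_le_sum fun t _ => ?_
      have hc : 0 ≤ σ₁ w s a * σ₂ w s b * G.δ s a b t :=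
        mul_nonneg (mul_nonneg ((h₁ w s).1 a) ((h₂ w s).1 b)) (hG.2.2.1 s a b t)
      rw [mul_assoc (σ₁ w s a * σ₂ w s b * G.δ s a b t)]
      exact mul_le_mul_of_nonneg_left (ih (w ++ [s]) t) hc

end aux

variable {S M : Type} [Fintype S] [DecidableEq S] [Fintype M] [DecidableEq M]

/-- One-step transition kernel when player 1 plays selector `ξ₁` and player 2 plays
move `b`. -/
noncomputable def pstep (G : CGame S M) (ξ₁ : S → M → ℝ) (s : S) (b : M) (t : S) : ℝ :=
  ∑ a : M, ξ₁ s a * G.δ s a b t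

/-- Attractor sets for reaching `U` under player-1 selector `ξ₁`. -/
noncomputable def attr (G : CGame S M) (ξ₁ : S → M → ℝ) (U : Set S) : ℕ → Finset S
  | 0 => Finset.univ.filter (· ∈ U)
  | k + 1 => attr G ξ₁ U k ∪ Finset.univ.filter
      (fun s => ∀ b ∈ G.Γ₂ s, ∃ t ∈ attr G ξ₁ U k, pstep G ξ₁ s b t ≠ 0)

variable (G : CGame S M) (ξ₁ : S → M → ℝ) (U : Set S)

lemma pstep_nonneg (hG : G.IsGame) (hξ₁ : IsSel1 G ξ₁) (s : S) (b : M) (t : S) :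
    0 ≤ pstep G ξ₁ s b t :=
  Finset.sum_nonneg fun a _ => mul_nonneg ((hξ₁ s).1 a) (hG.2.2.1 s a b t)

lemma pstep_sum (hG : G.IsGame) (hξ₁ : IsSel1 G ξ₁) (s : S) (b : M) :
    ∑ t : S, pstep G ξ₁ s b t = 1 := by
  simp only [pstep]
  rw [Finset.sum_comm]
  have : ∀ a, ∑ t : S, ξ₁ s a * G.δ s a b t = ξ₁ s a := by
    intro a; rw [← Finset.mul_sum, hG.2.2.2 s a b, mul_one]
  simp only [this, (hξ₁ s).2.2]

lemma attr_subset_succ (k : ℕ) : attr G ξ₁ U k ⊆ attr G ξ₁ U (k + 1) := by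
  rw [attr]; exact Finset.subset_union_left

lemma attr_mono {k n : ℕ} (h : k ≤ n) : attr G ξ₁ U k ⊆ attr G ξ₁ U n := by
  induction h with
  | refl => exact subset_refl _
  | step h ih => exact ih.trans (attr_subset_succ G ξ₁ U _)

lemma attr_fix {k : ℕ} (h : attr G ξ₁ U k = attr G ξ₁ U (k + 1)) :
    ∀ j, attr G ξ₁ U (k + j) = attr G ξ₁ U k := by
  intro j
  induction j with
  | zero => rfl
  | succ j ih =>
    have : k + (j + 1) = (k + j) + 1 := by omega
    rw [this, attr, ih, ← attr, ← h]

lemma attr_exists_fix : ∃ k ≤ Fintype.card S, attr G ξ₁ U k = attr G ξ₁ U (k + 1) := by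
  by_contra hcon
  push_neg at hcon
  have hgrow : ∀ k, k ≤ Fintype.card S + 1 → k ≤ (attr G ξ₁ U k).card := by
    intro k
    induction k with
    | zero => intro _; omega
    | succ k ih =>
      intro hk
      have h1 : k ≤ (attr G ξ₁ U k).card := ih (by omega)
      have h2 : attr G ξ₁ U k ⊂ attr G ξ₁ U (k + 1) :=
        (Finset.ssubset_iff_subset_ne.2 ⟨attr_subset_succ G ξ₁ U k, hcon k (by omega)⟩)
      have := Finset.card_lt_card h2
      omega
  have := hgrow (Fintype.card S + 1) (le_refl _)
  have hle : (attr G ξ₁ U (Fintype.card S + 1)).card ≤ Fintype.card S :=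
    Finset.card_le_card (Finset.subset_univ _) |>.trans (by simp)
  omega


variable {S M : Type} [Fintype S] [DecidableEq S] [Fintype M] [DecidableEq M]
variable (G : CGame S M) (ξ₁ : S → M → ℝ) (U : Set S)

lemma U_subset_attr {s : S} (hs : s ∈ U) (k : ℕ) : s ∈ attr G ξ₁ U k :=
  attr_mono G ξ₁ U (Nat.zero_le k)
    (by rw [attr]; exact Finset.mem_filter.2 ⟨Finset.mem_univ s, hs⟩)

lemma attr_fix_univ (hG : G.IsGame) (hξ₁ : IsSel1 G ξ₁) {k : ℕ}
    (hfix : attr G ξ₁ U k = attr G ξ₁ U (k + 1))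
    (hpure : ∀ ξ₂ : S → M → ℝ, IsSel2 G ξ₂ → (∀ s, ∃ b, ξ₂ s = pureDist b) →
      ∀ s, prReach G (ml ξ₁) (ml ξ₂) U s = 1) :
    attr G ξ₁ U k = Finset.univ := by
  by_contra hne
  obtain ⟨s₀, -, hs₀⟩ :=
    Finset.exists_of_ssubset (Finset.ssubset_univ_iff.2 hne : _)
  -- a choice of "escape-avoiding" move for every state outside the attractor
  have hch : ∀ s : S, ∃ b, b ∈ G.Γ₂ s ∧ (s ∉ attr G ξ₁ U k →
      ∀ t, pstep G ξ₁ s b t ≠ 0 → t ∉ attr G ξ₁ U k) := by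
    intro s
    by_cases hs : s ∈ attr G ξ₁ U k
    · exact ⟨(hG.2.1 s).choose, (hG.2.1 s).choose_spec, fun h => absurd hs h⟩
    · have hs' : s ∉ attr G ξ₁ U (k + 1) := by rwa [← hfix]
      rw [attr, Finset.mem_union, Finset.mem_filter] at hs'
      push_neg at hs'
      obtain ⟨b, hb, hbb⟩ := hs'.2 (Finset.mem_univ s)
      refine ⟨b, hb, fun _ t hpt => ?_⟩
      intro ht
      exact hpt (hbb t ht)
  choose bf hbf1 hbf2 using hch
  set ξ₂ : S → M → ℝ := fun s => pureDist (bf s) with hξ₂def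
  have hsel2 : IsSel2 G ξ₂ := by
    intro s
    refine ⟨fun b => by simp only [hξ₂def, pureDist]; split <;> norm_num,
      fun b hb => ?_, by simp [hξ₂def, pureDist]⟩
    simp only [hξ₂def, pureDist] at hb
    by_cases h : b = bf s
    · rw [h]; exact hbf1 s
    · simp [h] at hb
  have hzero : ∀ n w, ∀ s, s ∉ attr G ξ₁ U k →
      reachW G (ml ξ₁) (ml ξ₂) U n w s = 0 := by
    intro n
    induction n with
    | zero =>
      intro w s hs
      have hsU : s ∉ U := fun h => hs (U_subset_attr G ξ₁ U h k)
      simp [reachW, hsU]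
    | succ n ih =>
      intro w s hs
      have hsU : s ∉ U := fun h => hs (U_subset_attr G ξ₁ U h k)
      simp only [reachW, if_neg hsU]
      refine Finset.sum_eq_zero fun a _ => Finset.sum_eq_zero fun b _ =>
        Finset.sum_eq_zero fun t _ => ?_
      by_cases hb : ξ₂ s b = 0
      · simp [ml, hb]
      · have hbeq : b = bf s := by
          simp only [hξ₂def, pureDist] at hb
          by_contra h; simp [h] at hb
      -- the move played is bf s
        by_cases h1 : ξ₁ s a = 0
        · simp [ml, h1]
        by_cases hδ : G.δ s a b t = 0
        · simp [ml, hδ]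
        have hp : pstep G ξ₁ s b t ≠ 0 := by
          have hpos : 0 < ξ₁ s a * G.δ s a b t :=
            lt_of_le_of_ne (mul_nonneg ((hξ₁ s).1 a) (hG.2.2.1 s a b t))
              (Ne.symm (mul_ne_zero h1 hδ))
          have hle : ξ₁ s a * G.δ s a b t ≤ pstep G ξ₁ s b t :=
            Finset.single_le_sum
              (fun a' _ => mul_nonneg ((hξ₁ s).1 a') (hG.2.2.1 s a' b t))
              (Finset.mem_univ a)
          exact ne_of_gt (lt_of_lt_of_le hpos hle)
        have ht : t ∉ attr G ξ₁ U k := by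
          rw [hbeq] at hp
          exact hbf2 s hs t hp
        rw [ml, ih (w ++ [s]) t ht, mul_zero]
  have h0 : prReach G (ml ξ₁) (ml ξ₂) U s₀ = 0 := by
    unfold prReach
    have : ∀ n : ℕ, reachW G (ml ξ₁) (ml ξ₂) U n [] s₀ = 0 := fun n =>
      hzero n [] s₀ hs₀
    simp only [this, ciSup_const]
  have h1 := hpure ξ₂ hsel2 (fun s => ⟨bf s, rfl⟩) s₀
  rw [h0] at h1
  exact zero_ne_one h1


variable {S M : Type} [Fintype S] [DecidableEq S] [Fintype M] [DecidableEq M]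
variable (G : CGame S M) (ξ₁ : S → M → ℝ) (U : Set S)

lemma reach_attr (hG : G.IsGame) (hξ₁ : IsSel1 G ξ₁) {ε : ℝ} (hε : 0 < ε)
    (hεle : ∀ s b t, pstep G ξ₁ s b t ≠ 0 → ε ≤ pstep G ξ₁ s b t) (k : ℕ) :
    ∃ α, 0 < α ∧ α ≤ 1 ∧ ∀ σ₂, IsStrat2 G σ₂ → ∀ w, ∀ s ∈ attr G ξ₁ U k,
      α ≤ reachW G (ml ξ₁) σ₂ U k w s := by
  have hml : IsStrat1 G (ml ξ₁) := fun _ s => hξ₁ s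
  induction k with
  | zero =>
    refine ⟨1, one_pos, le_refl 1, fun σ₂ h₂ w s hs => ?_⟩
    rw [attr, Finset.mem_filter] at hs
    rw [reachW_mem G U _ _ hs.2]
  | succ k ih =>
    obtain ⟨α, hα0, hα1, hαall⟩ := ih
    refine ⟨min α (ε * α), lt_min hα0 (mul_pos hε hα0), (min_le_left _ _).trans hα1,
      fun σ₂ h₂ w s hs => ?_⟩
    by_cases hsk : s ∈ attr G ξ₁ U k
    · calc min α (ε * α) ≤ α := min_le_left _ _
        _ ≤ reachW G (ml ξ₁) σ₂ U k w s := hαall σ₂ h₂ w s hsk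
        _ ≤ reachW G (ml ξ₁) σ₂ U (k + 1) w s :=
          reachW_succ_le G U _ _ hG hml h₂ k w s
    · rw [attr, Finset.mem_union] at hs
      have hP := (Finset.mem_filter.1 (hs.resolve_left hsk)).2
      by_cases hsU : s ∈ U
      · rw [reachW_mem G U _ _ hsU]; exact (min_le_left _ _).trans hα1
      · simp only [reachW, if_neg hsU]
        rw [Finset.sum_comm]
        have hslice : ∀ b : M, (∑ a : M, ∑ t : S,
            ml ξ₁ w s a * σ₂ w s b * G.δ s a b t * reachW G (ml ξ₁) σ₂ U k (w ++ [s]) t)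
            = σ₂ w s b * ∑ a : M, ∑ t : S,
              ξ₁ s a * G.δ s a b t * reachW G (ml ξ₁) σ₂ U k (w ++ [s]) t := by
          intro b
          rw [Finset.mul_sum]
          refine Finset.sum_congr rfl fun a _ => ?_
          rw [Finset.mul_sum]
          refine Finset.sum_congr rfl fun t _ => ?_
          simp only [ml]; ring
        simp only [hslice]
        have hg : ∀ b : M, σ₂ w s b * (ε * α) ≤ σ₂ w s b * ∑ a : M, ∑ t : S,
            ξ₁ s a * G.δ s a b t * reachW G (ml ξ₁) σ₂ U k (w ++ [s]) t := by
          intro b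
          by_cases hb : σ₂ w s b = 0
          · rw [hb, zero_mul, zero_mul]
          refine mul_le_mul_of_nonneg_left ?_ ((h₂ w s).1 b)
          obtain ⟨t₀, ht₀, hpt₀⟩ := hP b ((h₂ w s).2.1 b hb)
          have hinner_nonneg : ∀ t : S, 0 ≤ ∑ a : M,
              ξ₁ s a * G.δ s a b t * reachW G (ml ξ₁) σ₂ U k (w ++ [s]) t :=
            fun t => Finset.sum_nonneg fun a _ =>
              mul_nonneg (mul_nonneg ((hξ₁ s).1 a) (hG.2.2.1 s a b t))
                (reachW_nonneg_s2 G U _ _ hG hml h₂ k (w ++ [s]) t)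
          have hswap : (∑ a : M, ∑ t : S,
              ξ₁ s a * G.δ s a b t * reachW G (ml ξ₁) σ₂ U k (w ++ [s]) t)
              = ∑ t : S, ∑ a : M,
                ξ₁ s a * G.δ s a b t * reachW G (ml ξ₁) σ₂ U k (w ++ [s]) t :=
            Finset.sum_comm
          rw [hswap]
          have hsingle : (∑ a : M, ξ₁ s a * G.δ s a b t₀ *
              reachW G (ml ξ₁) σ₂ U k (w ++ [s]) t₀)
              ≤ ∑ t : S, ∑ a : M,
                ξ₁ s a * G.δ s a b t * reachW G (ml ξ₁) σ₂ U k (w ++ [s]) t :=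
            Finset.single_le_sum (fun t _ => hinner_nonneg t) (Finset.mem_univ t₀)
          refine le_trans ?_ hsingle
          have heq : (∑ a : M, ξ₁ s a * G.δ s a b t₀ *
              reachW G (ml ξ₁) σ₂ U k (w ++ [s]) t₀)
              = pstep G ξ₁ s b t₀ * reachW G (ml ξ₁) σ₂ U k (w ++ [s]) t₀ := by
            rw [pstep, Finset.sum_mul]
          rw [heq]
          exact mul_le_mul (hεle s b t₀ hpt₀) (hαall σ₂ h₂ (w ++ [s]) t₀ ht₀)
            (le_of_lt hα0) (pstep_nonneg G ξ₁ hG hξ₁ s b t₀)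
        calc min α (ε * α) ≤ ε * α := min_le_right _ _
          _ = (∑ b : M, σ₂ w s b) * (ε * α) := by rw [(h₂ w s).2.2, one_mul]
          _ = ∑ b : M, σ₂ w s b * (ε * α) := Finset.sum_mul _ _ _
          _ ≤ _ := Finset.sum_le_sum fun b _ => hg b


theorem prReach_eq_one_of_pure_aux
    {S M : Type} [Fintype S] [DecidableEq S] [Fintype M] [DecidableEq M]
    (G : CGame S M) (hG : G.IsGame) (U : Set S)
    (ξ₁ : S → M → ℝ) (hξ₁ : CGame.IsSel1 G ξ₁)
    (hpure : ∀ ξ₂ : S → M → ℝ, CGame.IsSel2 G ξ₂ → (∀ s, ∃ b, ξ₂ s = CGame.pureDist b) →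
        ∀ s : S, CGame.prReach G (CGame.ml ξ₁) (CGame.ml ξ₂) U s = 1)
    (σ₂ : List S → S → M → ℝ) (h₂ : CGame.IsStrat2 G σ₂) (s : S) :
    CGame.prReach G (CGame.ml ξ₁) σ₂ U s = 1 := by
  have hml : IsStrat1 G (ml ξ₁) := fun _ t => hξ₁ t
  -- a positive lower bound on all nonzero one-step probabilities
  set Pos : Finset (S × M × S) :=
    Finset.univ.filter (fun x => pstep G ξ₁ x.1 x.2.1 x.2.2 ≠ 0) with hPos
  have hPosne : Pos.Nonempty := by
    obtain ⟨b, -⟩ := hG.2.1 s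
    have hsum : (∑ t : S, pstep G ξ₁ s b t) = 1 := pstep_sum G ξ₁ hG hξ₁ s b
    have : ∃ t : S, pstep G ξ₁ s b t ≠ 0 := by
      by_contra h
      push_neg at h
      rw [Finset.sum_eq_zero (fun t _ => h t)] at hsum
      exact zero_ne_one hsum
    obtain ⟨t, ht⟩ := this
    exact ⟨(s, b, t), Finset.mem_filter.2 ⟨Finset.mem_univ _, ht⟩⟩
  set ε : ℝ := Pos.inf' hPosne (fun x => pstep G ξ₁ x.1 x.2.1 x.2.2) with hεdef
  have hε : 0 < ε := by
    rw [hεdef, Finset.lt_inf'_iff]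
    intro x hx
    have hx' := (Finset.mem_filter.1 hx).2
    exact lt_of_le_of_ne (pstep_nonneg G ξ₁ hG hξ₁ _ _ _) (Ne.symm hx')
  have hεle : ∀ s' b t, pstep G ξ₁ s' b t ≠ 0 → ε ≤ pstep G ξ₁ s' b t := by
    intro s' b t h
    exact Finset.inf'_le _ (Finset.mem_filter.2 ⟨Finset.mem_univ (s', b, t), h⟩)
  -- the attractor reaches a fixpoint, which must be everything
  obtain ⟨k, -, hfix⟩ := attr_exists_fix G ξ₁ U
  have huniv : attr G ξ₁ U k = Finset.univ := attr_fix_univ G ξ₁ U hG hξ₁ hfix hpure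
  obtain ⟨α, hα0, hα1, hαall⟩ := reach_attr G ξ₁ U hG hξ₁ hε hεle k
  have hN : ∀ w t, 1 - reachW G (ml ξ₁) σ₂ U k w t ≤ 1 - α := by
    intro w t
    have := hαall σ₂ h₂ w t (huniv ▸ Finset.mem_univ t)
    linarith
  have hD : ∀ m : ℕ, ∀ w t, 1 - reachW G (ml ξ₁) σ₂ U (m * k) w t ≤ (1 - α) ^ m := by
    intro m
    induction m with
    | zero =>
      intro w t
      have := reachW_nonneg_s2 G U (ml ξ₁) σ₂ hG hml h₂ 0 w t
      simpa using by linarith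
    | succ m ih =>
      intro w t
      have hcomp := reachW_compose G U (ml ξ₁) σ₂ hG hml h₂
        (β := (1 - α) ^ m) (pow_nonneg (by linarith) m) ih k w t
      have hmk : (m + 1) * k = k + m * k := by ring
      rw [hmk, pow_succ]
      calc 1 - reachW G (ml ξ₁) σ₂ U (k + m * k) w t
          ≤ (1 - reachW G (ml ξ₁) σ₂ U k w t) * (1 - α) ^ m := hcomp
        _ ≤ (1 - α) * (1 - α) ^ m :=
            mul_le_mul_of_nonneg_right (hN w t) (pow_nonneg (by linarith) m)
        _ = (1 - α) ^ m * (1 - α) := mul_comm _ _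
  refine le_antisymm (ciSup_le fun n => reachW_le_one_s2 G U _ _ hG hml h₂ n [] s) ?_
  have hbdd : BddAbove (Set.range fun n => reachW G (ml ξ₁) σ₂ U n [] s) := by
    refine ⟨1, ?_⟩
    rintro x ⟨n, rfl⟩
    exact reachW_le_one_s2 G U _ _ hG hml h₂ n [] s
  have hm : ∀ m : ℕ, 1 - (1 - α) ^ m ≤ ⨆ n : ℕ, reachW G (ml ξ₁) σ₂ U n [] s := by
    intro m
    refine le_trans (by linarith [hD m [] s]) (le_ciSup hbdd (m * k))
  have htend : Filter.Tendsto (fun m : ℕ => 1 - (1 - α) ^ m) Filter.atTop (nhds 1) := by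
    have h0 : Filter.Tendsto (fun m : ℕ => (1 - α) ^ m) Filter.atTop (nhds 0) :=
      tendsto_pow_atTop_nhds_zero_of_lt_one (by linarith) (by linarith)
    simpa using Filter.Tendsto.sub tendsto_const_nhds h0
  exact le_of_tendsto' htend hm

end CGame

/-- **Properness can be checked against pure selectors.**
Given a player-1 selector `ξ₁` (with all states of `T ∪ W₂` absorbing), the
memoryless strategy `ml ξ₁` is proper iff for every pure player-2 selector `ξ₂`
and every state `s`, `Pr_s^{ml ξ₁, ml ξ₂}(Reach (T ∪ W₂)) = 1`. -/
theorem proper_iff_pure_selectors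
    {S M : Type} [Fintype S] [DecidableEq S] [Fintype M] [DecidableEq M]
    (G : CGame S M) (hG : G.IsGame) (T : Set S)
    (habs : ∀ s ∈ T ∪ CGame.W2 G T, CGame.Absorbing G s)
    (ξ₁ : S → M → ℝ) (hξ₁ : CGame.IsSel1 G ξ₁) :
    CGame.Proper G T (CGame.ml ξ₁) ↔
      ∀ ξ₂ : S → M → ℝ, CGame.IsSel2 G ξ₂ → (∀ s, ∃ b, ξ₂ s = CGame.pureDist b) →
        ∀ s : S,
          CGame.prReach G (CGame.ml ξ₁) (CGame.ml ξ₂) (T ∪ CGame.W2 G T) s = 1 := by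
  constructor
  · intro hprop ξ₂ hξ₂ _ s
    exact hprop (CGame.ml ξ₂) (fun w t => hξ₂ t) s
  · intro hpure σ₂ h₂ s
    exact CGame.prReach_eq_one_of_pure_aux G hG (T ∪ CGame.W2 G T) ξ₁ hξ₁ hpure σ₂ h₂ s
end

section
/- Let ξ₁^unif be the player-1 selector that at every state s ∈ S ∖ (T ∪ W₂) chooses all moves in Γ₁(s) uniformly at random. Then ξ₁^unif is proper, i.e., for all player-2 strategies σ₂ and all states s, Pr_s^{ξ̄₁^unif,σ₂}(Reach(T ∪ W₂)) = 1. -/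
open scoped Classical

set_option linter.unusedSectionVars false
namespace UniformProperAux

open CGame

variable {S M : Type} [Fintype S] [DecidableEq S] [Fintype M] [DecidableEq M]

lemma sum3_eq_one (G : CGame S M) (hG : G.IsGame) (s : S) {x y : M → ℝ}
    (hx : (∑ a, x a) = 1) (hy : (∑ b, y b) = 1) :
    (∑ a : M, ∑ b : M, ∑ t : S, x a * y b * G.δ s a b t) = 1 := by
  have h : ∀ a b : M, (∑ t : S, x a * y b * G.δ s a b t) = x a * y b := by
    intro a b
    rw [← Finset.mul_sum, hG.2.2.2 s a b, mul_one]
  have h2 : (∑ a : M, ∑ b : M, ∑ t : S, x a * y b * G.δ s a b t)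
      = ∑ a : M, ∑ b : M, x a * y b :=
    Finset.sum_congr rfl fun a _ => Finset.sum_congr rfl fun b _ => h a b
  rw [h2, ← Finset.sum_mul_sum, hx, hy, one_mul]

lemma reachW_nonneg (G : CGame S M) (hG : G.IsGame) {σ₁ σ₂ : List S → S → M → ℝ}
    (h₁ : IsStrat1 G σ₁) (h₂ : IsStrat2 G σ₂) (U : Set S) :
    ∀ n w s, 0 ≤ reachW G σ₁ σ₂ U n w s := by
  intro n
  induction n with
  | zero => intro w s; simp only [reachW]; split <;> norm_num
  | succ n ih =>
    intro w s
    simp only [reachW]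
    split
    · exact zero_le_one
    · refine Finset.sum_nonneg fun a _ => Finset.sum_nonneg fun b _ =>
        Finset.sum_nonneg fun t _ => ?_
      have ha := (h₁ w s).1 a
      have hb := (h₂ w s).1 b
      have hd := hG.2.2.1 s a b t
      have hr := ih (w ++ [s]) t
      positivity

lemma reachW_le_one (G : CGame S M) (hG : G.IsGame) {σ₁ σ₂ : List S → S → M → ℝ}
    (h₁ : IsStrat1 G σ₁) (h₂ : IsStrat2 G σ₂) (U : Set S) :
    ∀ n w s, reachW G σ₁ σ₂ U n w s ≤ 1 := by
  intro n
  induction n with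
  | zero => intro w s; simp only [reachW]; split <;> norm_num
  | succ n ih =>
    intro w s
    simp only [reachW]
    split
    · exact le_refl 1
    · calc (∑ a : M, ∑ b : M, ∑ t : S,
            σ₁ w s a * σ₂ w s b * G.δ s a b t * reachW G σ₁ σ₂ U n (w ++ [s]) t)
          ≤ ∑ a : M, ∑ b : M, ∑ t : S, σ₁ w s a * σ₂ w s b * G.δ s a b t := by
            refine Finset.sum_le_sum fun a _ => Finset.sum_le_sum fun b _ =>
              Finset.sum_le_sum fun t _ => ?_
            have ha := (h₁ w s).1 a
            have hb := (h₂ w s).1 b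
            have hd := hG.2.2.1 s a b t
            exact mul_le_of_le_one_right (by positivity) (ih (w ++ [s]) t)
        _ = 1 := sum3_eq_one G hG s (h₁ w s).2.2 (h₂ w s).2.2

lemma reachW_mem_one (G : CGame S M) {σ₁ σ₂ : List S → S → M → ℝ} {U : Set S}
    {s : S} (hs : s ∈ U) (n : ℕ) (w : List S) : reachW G σ₁ σ₂ U n w s = 1 := by
  cases n <;> simp [reachW, hs]


lemma key_contraction (G : CGame S M) (hG : G.IsGame) {σ₁ σ₂ : List S → S → M → ℝ}
    (h₁ : IsStrat1 G σ₁) (h₂ : IsStrat2 G σ₂) (U : Set S) (m : ℕ) (C : ℝ) (hC : 0 ≤ C)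
    (hm : ∀ w t, 1 - reachW G σ₁ σ₂ U m w t ≤ C) :
    ∀ N w s, 1 - reachW G σ₁ σ₂ U (N + m) w s
      ≤ C * (1 - reachW G σ₁ σ₂ U N w s) := by
  intro N
  induction N with
  | zero =>
    intro w s
    by_cases hs : s ∈ U
    · rw [reachW_mem_one G hs, reachW_mem_one G hs]
      simp
    · rw [Nat.zero_add]
      simp only [reachW, if_neg hs]
      simpa using hm w s
  | succ N ih =>
    intro w s
    by_cases hs : s ∈ U
    · rw [reachW_mem_one G hs, reachW_mem_one G hs]
      simp [hC]
    · rw [show N + 1 + m = (N + m) + 1 by omega]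
      simp only [reachW, if_neg hs]
      have hsum1 : (∑ a : M, ∑ b : M, ∑ t : S, σ₁ w s a * σ₂ w s b * G.δ s a b t) = 1 :=
        sum3_eq_one G hG s (h₁ w s).2.2 (h₂ w s).2.2
      have expand : ∀ f : S → ℝ,
          1 - (∑ a : M, ∑ b : M, ∑ t : S, σ₁ w s a * σ₂ w s b * G.δ s a b t * f t)
            = ∑ a : M, ∑ b : M, ∑ t : S,
                σ₁ w s a * σ₂ w s b * G.δ s a b t * (1 - f t) := by
        intro f
        have hterm : ∀ a b t, σ₁ w s a * σ₂ w s b * G.δ s a b t * (1 - f t)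
            = σ₁ w s a * σ₂ w s b * G.δ s a b t
              - σ₁ w s a * σ₂ w s b * G.δ s a b t * f t := by
          intro a b t; ring
        simp_rw [hterm, Finset.sum_sub_distrib]
        rw [hsum1]
      rw [expand, expand]
      simp_rw [Finset.mul_sum]
      refine Finset.sum_le_sum fun a _ => Finset.sum_le_sum fun b _ =>
        Finset.sum_le_sum fun t _ => ?_
      have hc : 0 ≤ σ₁ w s a * σ₂ w s b * G.δ s a b t := by
        have ha := (h₁ w s).1 a
        have hb := (h₂ w s).1 b
        have hd := hG.2.2.1 s a b t
        positivity
      calc σ₁ w s a * σ₂ w s b * G.δ s a b t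
            * (1 - reachW G σ₁ σ₂ U (N + m) (w ++ [s]) t)
          ≤ σ₁ w s a * σ₂ w s b * G.δ s a b t
            * (C * (1 - reachW G σ₁ σ₂ U N (w ++ [s]) t)) :=
            mul_le_mul_of_nonneg_left (ih (w ++ [s]) t) hc
        _ = C * (σ₁ w s a * σ₂ w s b * G.δ s a b t
            * (1 - reachW G σ₁ σ₂ U N (w ++ [s]) t)) := by ring

def Dset (G : CGame S M) (U : Set S) : ℕ → Set S
  | 0 => U
  | k + 1 => Dset G U k ∪
      {s | ∀ b ∈ G.Γ₂ s, ∃ a ∈ G.Γ₁ s, ∃ t ∈ Dset G U k, G.δ s a b t ≠ 0}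

lemma Dset_mono (G : CGame S M) (U : Set S) {k l : ℕ} (h : k ≤ l) :
    Dset G U k ⊆ Dset G U l := by
  induction h with
  | refl => exact subset_rfl
  | step _ ih => exact ih.trans (Set.subset_union_left)


lemma reachW_ge_pow (G : CGame S M) (hG : G.IsGame) (U : Set S)
    {ξ : S → M → ℝ} {σ₂ : List S → S → M → ℝ}
    (h₁ : IsStrat1 G (ml ξ)) (h₂ : IsStrat2 G σ₂)
    {ε : ℝ} (hε0 : 0 ≤ ε) (hε1 : ε ≤ 1)
    (hkey : ∀ s, s ∉ U → ∀ a ∈ G.Γ₁ s, ∀ b t, G.δ s a b t ≠ 0 →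
      ε ≤ ξ s a * G.δ s a b t) :
    ∀ k, ∀ s ∈ Dset G U k, ∀ n, k ≤ n → ∀ w,
      ε ^ k ≤ reachW G (ml ξ) σ₂ U n w s := by
  intro k
  induction k with
  | zero =>
    intro s hs n _ w
    rw [reachW_mem_one G (show s ∈ U from hs), pow_zero]
  | succ k ih =>
    intro s hs n hn w
    rcases hs with hs | hs
    · calc ε ^ (k + 1) ≤ ε ^ k := pow_le_pow_of_le_one hε0 hε1 (Nat.le_succ k)
        _ ≤ _ := ih s hs n (le_trans (Nat.le_succ k) hn) w
    · by_cases hsU : s ∈ U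
      · rw [reachW_mem_one G hsU]
        exact pow_le_one₀ hε0 hε1
      · obtain ⟨n', rfl⟩ : ∃ n', n = n' + 1 := ⟨n - 1, by omega⟩
        simp only [reachW, if_neg hsU]
        have hnn : ∀ a b t, 0 ≤ ml ξ w s a * σ₂ w s b * G.δ s a b t
            * reachW G (ml ξ) σ₂ U n' (w ++ [s]) t := by
          intro a b t
          have ha := (h₁ w s).1 a
          have hb := (h₂ w s).1 b
          have hd := hG.2.2.1 s a b t
          have hr := reachW_nonneg G hG h₁ h₂ U n' (w ++ [s]) t
          positivity
        rw [Finset.sum_comm]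
        have hb : ∀ b : M, σ₂ w s b * ε ^ (k + 1)
            ≤ ∑ a : M, ∑ t : S, ml ξ w s a * σ₂ w s b * G.δ s a b t
              * reachW G (ml ξ) σ₂ U n' (w ++ [s]) t := by
          intro b
          by_cases hbz : σ₂ w s b = 0
          · calc σ₂ w s b * ε ^ (k + 1) = 0 := by rw [hbz]; ring
              _ ≤ _ := Finset.sum_nonneg fun a _ => Finset.sum_nonneg fun t _ => hnn a b t
          · have hbΓ : b ∈ G.Γ₂ s := (h₂ w s).2.1 b hbz
            obtain ⟨a, haΓ, t, htD, hδ⟩ := hs b hbΓ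
            have h1 : ε ≤ ξ s a * G.δ s a b t := hkey s hsU a haΓ b t hδ
            have h2 : ε ^ k ≤ reachW G (ml ξ) σ₂ U n' (w ++ [s]) t :=
              ih t htD n' (by omega) (w ++ [s])
            have hbnn : 0 ≤ σ₂ w s b := (h₂ w s).1 b
            have hterm : σ₂ w s b * ε ^ (k + 1)
                ≤ ml ξ w s a * σ₂ w s b * G.δ s a b t
                  * reachW G (ml ξ) σ₂ U n' (w ++ [s]) t := by
              have hmul : ε * ε ^ k ≤ (ξ s a * G.δ s a b t)
                  * reachW G (ml ξ) σ₂ U n' (w ++ [s]) t :=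
                mul_le_mul h1 h2 (pow_nonneg hε0 k) (le_trans hε0 h1)
              calc σ₂ w s b * ε ^ (k + 1) = σ₂ w s b * (ε * ε ^ k) := by ring
                _ ≤ σ₂ w s b * ((ξ s a * G.δ s a b t)
                    * reachW G (ml ξ) σ₂ U n' (w ++ [s]) t) :=
                  mul_le_mul_of_nonneg_left hmul hbnn
                _ = ml ξ w s a * σ₂ w s b * G.δ s a b t
                    * reachW G (ml ξ) σ₂ U n' (w ++ [s]) t := by
                  simp only [ml]; ring
            calc σ₂ w s b * ε ^ (k + 1)
                ≤ ml ξ w s a * σ₂ w s b * G.δ s a b t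
                  * reachW G (ml ξ) σ₂ U n' (w ++ [s]) t := hterm
              _ ≤ ∑ t : S, ml ξ w s a * σ₂ w s b * G.δ s a b t
                  * reachW G (ml ξ) σ₂ U n' (w ++ [s]) t :=
                  Finset.single_le_sum (fun t _ => hnn a b t) (Finset.mem_univ t)
              _ ≤ ∑ a : M, ∑ t : S, ml ξ w s a * σ₂ w s b * G.δ s a b t
                  * reachW G (ml ξ) σ₂ U n' (w ++ [s]) t :=
                  Finset.single_le_sum
                    (fun a _ => Finset.sum_nonneg fun t _ => hnn a b t)
                    (Finset.mem_univ a)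
        calc ε ^ (k + 1) = ∑ b : M, σ₂ w s b * ε ^ (k + 1) := by
              rw [← Finset.sum_mul, (h₂ w s).2.2, one_mul]
          _ ≤ _ := Finset.sum_le_sum fun b _ => hb b

lemma pure_isStrat2 (G : CGame S M) (f : S → M) (hf : ∀ s, f s ∈ G.Γ₂ s) :
    IsStrat2 G (fun _ s => pureDist (f s)) := by
  intro w s
  refine ⟨fun b => ?_, fun b hb => ?_, ?_⟩
  · by_cases h : b = f s <;> simp [pureDist, h]
  · by_cases h : b = f s
    · rw [h]; exact hf s
    · simp [pureDist, h] at hb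
  · simp [pureDist]

lemma pure_isStrat1 (G : CGame S M) (f : S → M) (hf : ∀ s, f s ∈ G.Γ₁ s) :
    IsStrat1 G (fun _ s => pureDist (f s)) := by
  intro w s
  refine ⟨fun b => ?_, fun b hb => ?_, ?_⟩
  · by_cases h : b = f s <;> simp [pureDist, h]
  · by_cases h : b = f s
    · rw [h]; exact hf s
    · simp [pureDist, h] at hb
  · simp [pureDist]

lemma prReach_nonneg (G : CGame S M) (hG : G.IsGame) {σ₁ σ₂ : List S → S → M → ℝ}
    (h₁ : IsStrat1 G σ₁) (h₂ : IsStrat2 G σ₂) (U : Set S) (s : S) :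
    0 ≤ prReach G σ₁ σ₂ U s := by
  have hbdd : BddAbove (Set.range fun n => reachW G σ₁ σ₂ U n [] s) := by
    refine ⟨1, ?_⟩
    rintro x ⟨n, rfl⟩
    exact reachW_le_one G hG h₁ h₂ U n [] s
  exact le_trans (reachW_nonneg G hG h₁ h₂ U 0 [] s) (le_ciSup hbdd 0)

lemma prReach_le_one (G : CGame S M) (hG : G.IsGame) {σ₁ σ₂ : List S → S → M → ℝ}
    (h₁ : IsStrat1 G σ₁) (h₂ : IsStrat2 G σ₂) (U : Set S) (s : S) :
    prReach G σ₁ σ₂ U s ≤ 1 :=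
  ciSup_le fun n => reachW_le_one G hG h₁ h₂ U n [] s

lemma exists_mem_Dset (G : CGame S M) (hG : G.IsGame) (T : Set S) :
    ∀ s : S, ∃ k, s ∈ Dset G (T ∪ W2 G T) k := by
  set U := T ∪ W2 G T with hU
  by_contra hcon
  push_neg at hcon
  obtain ⟨s₀, hs₀⟩ := hcon
  set R : Set S := {s | ∀ k, s ∉ Dset G U k} with hR
  have hs₀R : s₀ ∈ R := fun k => hs₀ k
  -- trap property of R
  have htrap : ∀ s ∈ R, ∃ b ∈ G.Γ₂ s,
      ∀ a ∈ G.Γ₁ s, ∀ t, G.δ s a b t ≠ 0 → t ∈ R := by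
    intro s hs
    set P : M → ℕ → Prop :=
      fun b k => ∀ a ∈ G.Γ₁ s, ∀ t, t ∈ Dset G U k → G.δ s a b t = 0 with hP
    have hPk : ∀ k, ∃ b ∈ G.Γ₂ s, P b k := by
      intro k
      have h1 : s ∉ Dset G U (k + 1) := hs (k + 1)
      have h2 : ¬ (∀ b ∈ G.Γ₂ s, ∃ a ∈ G.Γ₁ s, ∃ t ∈ Dset G U k, G.δ s a b t ≠ 0) :=
        fun hc => h1 (Or.inr hc)
      push_neg at h2
      obtain ⟨b, hbΓ, hb⟩ := h2
      exact ⟨b, hbΓ, fun a ha t ht => hb a ha t ht⟩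
    have hPmono : ∀ b, ∀ {k l : ℕ}, k ≤ l → P b l → P b k :=
      fun b k l hkl h a ha t ht => h a ha t (Dset_mono G U hkl ht)
    have hPall : ∃ b ∈ G.Γ₂ s, ∀ k, P b k := by
      by_contra hc
      push_neg at hc
      classical
      set g : M → ℕ := fun b => if h : ∃ k, ¬ P b k then h.choose else 0 with hg
      set K : ℕ := Finset.univ.sup g with hK
      obtain ⟨b, hbΓ, hbK⟩ := hPk K
      have hex : ∃ k, ¬ P b k := hc b hbΓ
      have hgb : ¬ P b (g b) := by
        rw [hg]; simp only [dif_pos hex]; exact hex.choose_spec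
      exact hgb (hPmono b (Finset.le_sup (Finset.mem_univ b)) hbK)
    obtain ⟨b, hbΓ, hb⟩ := hPall
    refine ⟨b, hbΓ, fun a ha t hδ k htD => ?_⟩
    exact hδ (hb k a ha t htD)
  -- choose a pure player-2 strategy
  have hall : ∀ s : S, ∃ b, b ∈ G.Γ₂ s ∧
      (s ∈ R → ∀ a ∈ G.Γ₁ s, ∀ t, G.δ s a b t ≠ 0 → t ∈ R) := by
    intro s
    by_cases hs : s ∈ R
    · obtain ⟨b, hbΓ, hb⟩ := htrap s hs
      exact ⟨b, hbΓ, fun _ => hb⟩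
    · exact ⟨(hG.2.1 s).choose, (hG.2.1 s).choose_spec, fun h => absurd h hs⟩
  choose bsel hbΓ hbtrap using hall
  set σstar : List S → S → M → ℝ := fun _ s => pureDist (bsel s) with hσstar
  have hσstar2 : IsStrat2 G σstar := pure_isStrat2 G bsel hbΓ
  -- T is contained in Dset 0
  have hTD : ∀ s ∈ R, s ∉ T := by
    intro s hs hsT
    exact hs 0 (Or.inl hsT)
  -- reachW T is 0 on R against σstar
  have hzero : ∀ σ₁, IsStrat1 G σ₁ → ∀ n w, ∀ s ∈ R,
      reachW G σ₁ σstar T n w s = 0 := by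
    intro σ₁ hσ₁ n
    induction n with
    | zero =>
      intro w s hs
      simp only [reachW, if_neg (hTD s hs)]
    | succ n ih =>
      intro w s hs
      simp only [reachW, if_neg (hTD s hs)]
      refine Finset.sum_eq_zero fun a _ => Finset.sum_eq_zero fun b _ =>
        Finset.sum_eq_zero fun t _ => ?_
      by_cases hb : σstar w s b = 0
      · rw [hb]; ring
      · have hbb : b = bsel s := by
          by_contra hne
          exact hb (by simp [hσstar, pureDist, hne])
        subst hbb
        by_cases haz : σ₁ w s a = 0
        · rw [haz]; ring
        · have haΓ : a ∈ G.Γ₁ s := (hσ₁ w s).2.1 a haz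
          by_cases hd : G.δ s a (bsel s) t = 0
          · rw [hd]; ring
          · rw [ih (w ++ [s]) t (hbtrap s hs a haΓ t hd), mul_zero]
  -- hence the value at s₀ is 0
  have hprzero : ∀ σ₁, IsStrat1 G σ₁ → prReach G σ₁ σstar T s₀ = 0 := by
    intro σ₁ hσ₁
    have : ∀ n, reachW G σ₁ σstar T n [] s₀ = 0 := fun n => hzero σ₁ hσ₁ n [] s₀ hs₀R
    simp only [prReach, this, ciSup_const]
  haveI hne1 : Nonempty {σ // IsStrat1 G σ} := by
    refine ⟨⟨fun _ s => pureDist ((hG.1 s).choose), ?_⟩⟩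
    exact pure_isStrat1 G _ fun s => (hG.1 s).choose_spec
  have hval : valReach G T s₀ = 0 := by
    have hub : ∀ σ₁ : {σ // IsStrat1 G σ}, valReachUnder G σ₁.1 T s₀ ≤ 0 := by
      intro σ₁
      have hbdd : BddBelow (Set.range fun σ₂ : {σ // IsStrat2 G σ} =>
          prReach G σ₁.1 σ₂.1 T s₀) := by
        refine ⟨0, ?_⟩
        rintro x ⟨σ, rfl⟩
        exact prReach_nonneg G hG σ₁.2 σ.2 T s₀
      have := ciInf_le hbdd (⟨σstar, hσstar2⟩ : {σ // IsStrat2 G σ})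
      rw [hprzero σ₁.1 σ₁.2] at this
      exact this
    have hlb : 0 ≤ valReach G T s₀ := by
      obtain ⟨σ₁⟩ := hne1
      have h0 : 0 ≤ valReachUnder G σ₁.1 T s₀ := by
        haveI : Nonempty {σ // IsStrat2 G σ} := ⟨⟨σstar, hσstar2⟩⟩
        exact le_ciInf fun σ => prReach_nonneg G hG σ₁.2 σ.2 T s₀
      have hbdd : BddAbove (Set.range fun σ : {σ // IsStrat1 G σ} =>
          valReachUnder G σ.1 T s₀) := by
        refine ⟨1, ?_⟩
        rintro x ⟨σ, rfl⟩
        have hbddb : BddBelow (Set.range fun σ₂ : {σ // IsStrat2 G σ} =>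
            prReach G σ.1 σ₂.1 T s₀) := by
          refine ⟨0, ?_⟩
          rintro x ⟨τ, rfl⟩
          exact prReach_nonneg G hG σ.2 τ.2 T s₀
        exact le_trans (ciInf_le hbddb (⟨σstar, hσstar2⟩ : {σ // IsStrat2 G σ}))
          (prReach_le_one G hG σ.2 hσstar2 T s₀)
      exact le_trans h0 (le_ciSup hbdd σ₁)
    exact le_antisymm (ciSup_le hub) hlb
  exact hs₀ 0 (Or.inr hval)
end UniformProperAux

/-- **The uniform selector is proper.**
Let `ξ` be the player-1 selector that at every state `s ∉ T ∪ W₂` chooses all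
moves in `Γ₁(s)` uniformly at random. Then `ξ` is proper: against every player-2
strategy, from every state, `T ∪ W₂` is reached with probability 1. -/
theorem uniform_selector_proper
    {S M : Type} [Fintype S] [DecidableEq S] [Fintype M] [DecidableEq M]
    (G : CGame S M) (hG : G.IsGame) (T : Set S)
    (habs : ∀ s ∈ T ∪ CGame.W2 G T, CGame.Absorbing G s)
    (ξ : S → M → ℝ) (hξ : CGame.IsSel1 G ξ)
    (hunif : ∀ s, s ∉ T ∪ CGame.W2 G T → ξ s = CGame.uniformSel G s) :
    ∀ σ₂, CGame.IsStrat2 G σ₂ →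
      ∀ s : S, CGame.prReach G (CGame.ml ξ) σ₂ (T ∪ CGame.W2 G T) s = 1 := by
  open CGame UniformProperAux in
  intro σ₂ hσ₂ s
  set U : Set S := T ∪ CGame.W2 G T with hUdef
  haveI : Nonempty M := ⟨(hG.1 s).choose⟩
  have h₁ : IsStrat1 G (ml ξ) := fun w s' => hξ s'
  -- minimal positive transition probability
  have hPne : (Finset.univ.filter fun p : S × M × M × S =>
      0 < G.δ p.1 p.2.1 p.2.2.1 p.2.2.2).Nonempty := by
    obtain ⟨a⟩ := (inferInstance : Nonempty M)
    have hex : ∃ t, 0 < G.δ s a a t := by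
      by_contra h
      push_neg at h
      have hsum : (∑ t, G.δ s a a t) ≤ 0 := Finset.sum_nonpos fun t _ => h t
      rw [hG.2.2.2 s a a] at hsum
      linarith
    exact ⟨(s, a, a, hex.choose), by
      simp only [Finset.mem_filter, Finset.mem_univ, true_and]
      exact hex.choose_spec⟩
  set δmin : ℝ := (Finset.univ.filter fun p : S × M × M × S =>
      0 < G.δ p.1 p.2.1 p.2.2.1 p.2.2.2).inf' hPne
      (fun p => G.δ p.1 p.2.1 p.2.2.1 p.2.2.2) with hδmin
  have hδmin_pos : 0 < δmin := by
    rw [hδmin, Finset.lt_inf'_iff]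
    intro p hp
    exact (Finset.mem_filter.mp hp).2
  have hδmin_le : ∀ s' a b t, 0 < G.δ s' a b t → δmin ≤ G.δ s' a b t := by
    intro s' a b t h
    exact Finset.inf'_le (fun p : S × M × M × S => G.δ p.1 p.2.1 p.2.2.1 p.2.2.2)
      (Finset.mem_filter.mpr ⟨Finset.mem_univ ((s', a, b, t) : S × M × M × S), h⟩)
  have hδmin_le_one : δmin ≤ 1 := by
    obtain ⟨p, hp⟩ := hPne
    have h1 : δmin ≤ G.δ p.1 p.2.1 p.2.2.1 p.2.2.2 :=
      hδmin_le _ _ _ _ (Finset.mem_filter.mp hp).2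
    have h2 : G.δ p.1 p.2.1 p.2.2.1 p.2.2.2 ≤ 1 := by
      have := hG.2.2.2 p.1 p.2.1 p.2.2.1
      calc G.δ p.1 p.2.1 p.2.2.1 p.2.2.2
          ≤ ∑ t, G.δ p.1 p.2.1 p.2.2.1 t :=
            Finset.single_le_sum (fun t _ => hG.2.2.1 p.1 p.2.1 p.2.2.1 t)
              (Finset.mem_univ _)
        _ = 1 := this
    linarith
  have hcardM : (0 : ℝ) < (Fintype.card M : ℝ) := by
    exact_mod_cast Fintype.card_pos
  set ε : ℝ := δmin / (Fintype.card M : ℝ) with hε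
  have hε0 : 0 < ε := div_pos hδmin_pos hcardM
  have hε1 : ε ≤ 1 := by
    rw [hε, div_le_one hcardM]
    have : (1 : ℝ) ≤ (Fintype.card M : ℝ) := by exact_mod_cast Fintype.card_pos
    linarith
  -- the key one-step bound for the uniform selector
  have hkey : ∀ s', s' ∉ U → ∀ a ∈ G.Γ₁ s', ∀ b t, G.δ s' a b t ≠ 0 →
      ε ≤ ξ s' a * G.δ s' a b t := by
    intro s' hs' a ha b t hδ
    have hδpos : 0 < G.δ s' a b t := lt_of_le_of_ne (hG.2.2.1 s' a b t) (Ne.symm hδ)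
    have hx : ξ s' a = 1 / ((G.Γ₁ s').card : ℝ) := by
      rw [hunif s' hs']
      simp only [uniformSel, if_pos ha]
    have hcard₁ : (0 : ℝ) < ((G.Γ₁ s').card : ℝ) := by
      exact_mod_cast Finset.card_pos.mpr (hG.1 s')
    have hcard₂ : ((G.Γ₁ s').card : ℝ) ≤ (Fintype.card M : ℝ) := by
      exact_mod_cast Finset.card_le_univ (G.Γ₁ s')
    have hdiv : δmin / (Fintype.card M : ℝ) ≤ G.δ s' a b t / ((G.Γ₁ s').card : ℝ) :=
      div_le_div₀ (le_of_lt hδpos) (hδmin_le s' a b t hδpos) hcard₁ hcard₂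
    rw [hε, hx]
    calc δmin / (Fintype.card M : ℝ) ≤ G.δ s' a b t / ((G.Γ₁ s').card : ℝ) := hdiv
      _ = 1 / ((G.Γ₁ s').card : ℝ) * G.δ s' a b t := by ring
  -- all states are eventually in the attractor
  have hex := exists_mem_Dset G hG T
  choose g hg using hex
  set N : ℕ := Finset.univ.sup g with hN
  have hDN : ∀ s' : S, s' ∈ Dset G U N := fun s' =>
    Dset_mono G U (Finset.le_sup (Finset.mem_univ s')) (hg s')
  set α : ℝ := ε ^ N with hα
  have hα0 : 0 < α := pow_pos hε0 N
  have hα1 : α ≤ 1 := pow_le_one₀ (le_of_lt hε0) hε1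
  have hbase : ∀ w s', 1 - reachW G (ml ξ) σ₂ U N w s' ≤ 1 - α := by
    intro w s'
    have := reachW_ge_pow G hG U h₁ hσ₂ (le_of_lt hε0) hε1 hkey N s' (hDN s') N
      le_rfl w
    linarith
  have hiter : ∀ m, ∀ w s', 1 - reachW G (ml ξ) σ₂ U (m * N) w s' ≤ (1 - α) ^ m := by
    intro m
    induction m with
    | zero =>
      intro w s'
      simp only [Nat.zero_mul, pow_zero]
      have := reachW_nonneg G hG h₁ hσ₂ U 0 w s'
      linarith
    | succ m ih =>
      intro w s'
      rw [show (m + 1) * N = N + m * N by ring]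
      calc 1 - reachW G (ml ξ) σ₂ U (N + m * N) w s'
          ≤ (1 - α) ^ m * (1 - reachW G (ml ξ) σ₂ U N w s') :=
            key_contraction G hG h₁ hσ₂ U (m * N) ((1 - α) ^ m)
              (pow_nonneg (by linarith) m) (fun w' t => ih w' t) N w s'
        _ ≤ (1 - α) ^ m * (1 - α) :=
            mul_le_mul_of_nonneg_left (hbase w s') (pow_nonneg (by linarith) m)
        _ = (1 - α) ^ (m + 1) := (pow_succ (1 - α) m).symm
  -- conclude
  have hbdd : BddAbove (Set.range fun n => reachW G (ml ξ) σ₂ U n [] s) := by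
    refine ⟨1, ?_⟩
    rintro x ⟨n, rfl⟩
    exact reachW_le_one G hG h₁ hσ₂ U n [] s
  refine le_antisymm (ciSup_le fun n => reachW_le_one G hG h₁ hσ₂ U n [] s) ?_
  have hle : ∀ m : ℕ, 1 - (1 - α) ^ m ≤ prReach G (ml ξ) σ₂ U s := by
    intro m
    have h1 := hiter m [] s
    have h2 : reachW G (ml ξ) σ₂ U (m * N) [] s ≤ prReach G (ml ξ) σ₂ U s :=
      le_ciSup hbdd (m * N)
    linarith
  have htend : Filter.Tendsto (fun m : ℕ => 1 - (1 - α) ^ m)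
      Filter.atTop (nhds (1 - 0)) := by
    exact Filter.Tendsto.const_sub 1
      (tendsto_pow_atTop_nhds_zero_of_lt_one (by linarith) (by linarith))
  have := le_of_tendsto' htend hle
  linarith
end

section
/- Let v be a valuation such that Pre₁(v) ≥ v pointwise and v(s) = 0 for all states s ∈ W₂, and let ξ₁ be a player-1 selector with Pre_{1:ξ₁}(v) = Pre₁(v). If ξ₁ is proper, then for every player-2 strategy σ₂ and every state s, Pr_s^{ξ̄₁,σ₂}(Reach(T)) ≥ v(s). -/
open scoped Classical

section Aux

open CGame

variable {S M : Type} [Fintype S] [DecidableEq S] [Fintype M] [DecidableEq M]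

lemma cube_sum (G : CGame S M) (hG : G.IsGame) (s : S) {x y : M → ℝ}
    (hx : (∑ a, x a) = 1) (hy : (∑ b, y b) = 1) :
    (∑ a : M, ∑ b : M, ∑ t : S, x a * y b * G.δ s a b t) = 1 := by
  have hδ := hG.2.2.2
  simp only [← Finset.mul_sum, hδ, mul_one, hy, hx]

lemma reachW_nonneg (G : CGame S M) (hG : G.IsGame) {σ₁ σ₂ : List S → S → M → ℝ}
    (h1 : IsStrat1 G σ₁) (h2 : IsStrat2 G σ₂) (X : Set S) :
    ∀ n w s, 0 ≤ reachW G σ₁ σ₂ X n w s := by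
  intro n
  induction n with
  | zero => intro w s; simp only [reachW]; split <;> norm_num
  | succ n ih =>
    intro w s
    simp only [reachW]
    split
    · norm_num
    · refine Finset.sum_nonneg fun a _ => Finset.sum_nonneg fun b _ =>
        Finset.sum_nonneg fun t _ => ?_
      exact mul_nonneg (mul_nonneg (mul_nonneg ((h1 w s).1 a) ((h2 w s).1 b))
        (hG.2.2.1 s a b t)) (ih _ t)

lemma reachW_le_one (G : CGame S M) (hG : G.IsGame) {σ₁ σ₂ : List S → S → M → ℝ}
    (h1 : IsStrat1 G σ₁) (h2 : IsStrat2 G σ₂) (X : Set S) :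
    ∀ n w s, reachW G σ₁ σ₂ X n w s ≤ 1 := by
  intro n
  induction n with
  | zero => intro w s; simp only [reachW]; split <;> norm_num
  | succ n ih =>
    intro w s
    simp only [reachW]
    split
    · exact le_refl 1
    · calc (∑ a : M, ∑ b : M, ∑ t : S,
            σ₁ w s a * σ₂ w s b * G.δ s a b t * reachW G σ₁ σ₂ X n (w ++ [s]) t)
          ≤ ∑ a : M, ∑ b : M, ∑ t : S, σ₁ w s a * σ₂ w s b * G.δ s a b t := by
            refine Finset.sum_le_sum fun a _ => Finset.sum_le_sum fun b _ =>
              Finset.sum_le_sum fun t _ => ?_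
            have hc : 0 ≤ σ₁ w s a * σ₂ w s b * G.δ s a b t :=
              mul_nonneg (mul_nonneg ((h1 w s).1 a) ((h2 w s).1 b)) (hG.2.2.1 s a b t)
            calc σ₁ w s a * σ₂ w s b * G.δ s a b t * reachW G σ₁ σ₂ X n (w ++ [s]) t
                ≤ σ₁ w s a * σ₂ w s b * G.δ s a b t * 1 :=
                  mul_le_mul_of_nonneg_left (ih _ t) hc
              _ = σ₁ w s a * σ₂ w s b * G.δ s a b t := mul_one _
        _ = 1 := cube_sum G hG s (h1 w s).2.2 (h2 w s).2.2

lemma key_submartingale (G : CGame S M) (hG : G.IsGame) (T : Set S)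
    (v : S → ℝ) (hv01 : ∀ s, 0 ≤ v s ∧ v s ≤ 1)
    (hpre : ∀ s, v s ≤ CGame.pre1 G v s)
    (hW2 : ∀ s ∈ CGame.W2 G T, v s = 0)
    (ξ₁ : S → M → ℝ) (hξ₁ : CGame.IsSel1 G ξ₁)
    (hopt : ∀ s, CGame.pre1Sel G v s (ξ₁ s) = CGame.pre1 G v s)
    (σ₂ : List S → S → M → ℝ) (h2 : IsStrat2 G σ₂) :
    ∀ n w s, v s ≤ reachW G (ml ξ₁) σ₂ T n w s + 1
      - reachW G (ml ξ₁) σ₂ (T ∪ W2 G T) n w s := by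
  have h1 : IsStrat1 G (ml ξ₁) := fun w s => hξ₁ s
  intro n
  induction n with
  | zero =>
    intro w s
    by_cases hT : s ∈ T
    · simp only [reachW, if_pos hT, if_pos (Set.mem_union_left _ hT)]
      linarith [(hv01 s).2]
    · by_cases hW : s ∈ W2 G T
      · simp only [reachW, if_neg hT, if_pos (Set.mem_union_right _ hW)]
        rw [hW2 s hW]; norm_num
      · have hU : s ∉ T ∪ W2 G T := by
          intro h; rcases h with h | h; exact hT h; exact hW h
        simp only [reachW, if_neg hT, if_neg hU]
        linarith [(hv01 s).2]
  | succ n ih =>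
    intro w s
    by_cases hT : s ∈ T
    · simp only [reachW, if_pos hT, if_pos (Set.mem_union_left _ hT)]
      linarith [(hv01 s).2]
    · by_cases hW : s ∈ W2 G T
      · have h1le := reachW_nonneg G hG h1 h2 T (n + 1) w s
        have h2le := reachW_le_one G hG h1 h2 (T ∪ W2 G T) (n + 1) w s
        rw [hW2 s hW]
        linarith
      · have hU : s ∉ T ∪ W2 G T := by
          intro h; rcases h with h | h; exact hT h; exact hW h
        -- the one-step expectation bound
        set c : M → M → S → ℝ := fun a b t => ξ₁ s a * σ₂ w s b * G.δ s a b t with hc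
        have hcnn : ∀ a b t, 0 ≤ c a b t := fun a b t =>
          mul_nonneg (mul_nonneg ((hξ₁ s).1 a) ((h2 w s).1 b)) (hG.2.2.1 s a b t)
        have hcsum : (∑ a : M, ∑ b : M, ∑ t : S, c a b t) = 1 :=
          cube_sum G hG s (hξ₁ s).2.2 (h2 w s).2.2
        have step1 : v s ≤ preSS G v s (ξ₁ s) (σ₂ w s) := by
          have hb : BddBelow (Set.range fun y : {y : M → ℝ // IsDistOn (G.Γ₂ s) y} =>
              preSS G v s (ξ₁ s) y.1) := by
            refine ⟨0, fun r hr => ?_⟩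
            obtain ⟨y, rfl⟩ := hr
            refine Finset.sum_nonneg fun a _ => Finset.sum_nonneg fun b _ =>
              Finset.sum_nonneg fun t _ => ?_
            exact mul_nonneg (mul_nonneg (mul_nonneg (hv01 t).1 (hG.2.2.1 s a b t))
              ((hξ₁ s).1 a)) (y.2.1 b)
          have := ciInf_le hb (⟨σ₂ w s, h2 w s⟩ : {y : M → ℝ // IsDistOn (G.Γ₂ s) y})
          calc v s ≤ pre1 G v s := hpre s
            _ = pre1Sel G v s (ξ₁ s) := (hopt s).symm
            _ ≤ preSS G v s (ξ₁ s) (σ₂ w s) := this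
        have step2 : preSS G v s (ξ₁ s) (σ₂ w s)
            = ∑ a : M, ∑ b : M, ∑ t : S, c a b t * v t := by
          unfold preSS
          refine Finset.sum_congr rfl fun a _ => Finset.sum_congr rfl fun b _ =>
            Finset.sum_congr rfl fun t _ => ?_
          simp only [hc]; ring
        have step3 : (∑ a : M, ∑ b : M, ∑ t : S, c a b t * v t)
            ≤ ∑ a : M, ∑ b : M, ∑ t : S, c a b t *
              (reachW G (ml ξ₁) σ₂ T n (w ++ [s]) t + 1
                - reachW G (ml ξ₁) σ₂ (T ∪ W2 G T) n (w ++ [s]) t) := by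
          refine Finset.sum_le_sum fun a _ => Finset.sum_le_sum fun b _ =>
            Finset.sum_le_sum fun t _ => ?_
          exact mul_le_mul_of_nonneg_left (ih _ t) (hcnn a b t)
        have step4 : (∑ a : M, ∑ b : M, ∑ t : S, c a b t *
              (reachW G (ml ξ₁) σ₂ T n (w ++ [s]) t + 1
                - reachW G (ml ξ₁) σ₂ (T ∪ W2 G T) n (w ++ [s]) t))
            = (∑ a : M, ∑ b : M, ∑ t : S, c a b t * reachW G (ml ξ₁) σ₂ T n (w ++ [s]) t)
              + 1
              - ∑ a : M, ∑ b : M, ∑ t : S,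
                  c a b t * reachW G (ml ξ₁) σ₂ (T ∪ W2 G T) n (w ++ [s]) t := by
          simp only [mul_sub, mul_add, mul_one, Finset.sum_add_distrib,
            Finset.sum_sub_distrib, hcsum]
        have hrT : reachW G (ml ξ₁) σ₂ T (n + 1) w s
            = ∑ a : M, ∑ b : M, ∑ t : S, c a b t * reachW G (ml ξ₁) σ₂ T n (w ++ [s]) t := by
          simp only [reachW, if_neg hT, ml, hc]
        have hrU : reachW G (ml ξ₁) σ₂ (T ∪ W2 G T) (n + 1) w s
            = ∑ a : M, ∑ b : M, ∑ t : S,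
                c a b t * reachW G (ml ξ₁) σ₂ (T ∪ W2 G T) n (w ++ [s]) t := by
          simp only [reachW, if_neg hU, ml, hc]
        rw [hrT, hrU]
        calc v s ≤ preSS G v s (ξ₁ s) (σ₂ w s) := step1
          _ = _ := step2
          _ ≤ _ := step3
          _ = _ := step4

end Aux

/-- **Proper value-optimal selectors guarantee the valuation.**
Let `v` be a valuation with `Pre₁(v) ≥ v` and `v(s) = 0` on `W₂`, and let `ξ₁` be
a player-1 selector with `Pre_{1:ξ₁}(v) = Pre₁(v)`. If `ξ₁` is proper, then for
every player-2 strategy `σ₂` and every state `s`,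
`Pr_s^{ml ξ₁, σ₂}(Reach T) ≥ v(s)`. -/
theorem proper_value_optimal_selector_guarantee
    {S M : Type} [Fintype S] [DecidableEq S] [Fintype M] [DecidableEq M]
    (G : CGame S M) (hG : G.IsGame) (T : Set S)
    (habs : ∀ s ∈ T ∪ CGame.W2 G T, CGame.Absorbing G s)
    (v : S → ℝ) (hv01 : ∀ s, 0 ≤ v s ∧ v s ≤ 1)
    (hpre : ∀ s, v s ≤ CGame.pre1 G v s)
    (hW2 : ∀ s ∈ CGame.W2 G T, v s = 0)
    (ξ₁ : S → M → ℝ) (hξ₁ : CGame.IsSel1 G ξ₁)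
    (hopt : ∀ s, CGame.pre1Sel G v s (ξ₁ s) = CGame.pre1 G v s)
    (hproper : CGame.Proper G T (CGame.ml ξ₁)) :
    ∀ σ₂, CGame.IsStrat2 G σ₂ →
      ∀ s : S, v s ≤ CGame.prReach G (CGame.ml ξ₁) σ₂ T s := by
  intro σ₂ h2 s
  have h1 : CGame.IsStrat1 G (CGame.ml ξ₁) := fun w s => hξ₁ s
  have key := key_submartingale G hG T v hv01 hpre hW2 ξ₁ hξ₁ hopt σ₂ h2
  have hsup : (⨆ n : ℕ, CGame.reachW G (CGame.ml ξ₁) σ₂ (T ∪ CGame.W2 G T) n [] s) = 1 :=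
    hproper σ₂ h2 s
  have hbT : BddAbove (Set.range fun n : ℕ => CGame.reachW G (CGame.ml ξ₁) σ₂ T n [] s) := by
    refine ⟨1, fun r hr => ?_⟩
    obtain ⟨n, rfl⟩ := hr
    exact reachW_le_one G hG h1 h2 T n [] s
  have hbU : BddAbove (Set.range fun n : ℕ =>
      CGame.reachW G (CGame.ml ξ₁) σ₂ (T ∪ CGame.W2 G T) n [] s) := by
    refine ⟨1, fun r hr => ?_⟩
    obtain ⟨n, rfl⟩ := hr
    exact reachW_le_one G hG h1 h2 _ n [] s
  refine le_of_forall_pos_le_add fun ε hε => ?_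
  have hlt : 1 - ε < ⨆ n : ℕ, CGame.reachW G (CGame.ml ξ₁) σ₂ (T ∪ CGame.W2 G T) n [] s := by
    rw [hsup]; linarith
  obtain ⟨n, hn⟩ := (lt_ciSup_iff hbU).mp hlt
  have h3 := key n [] s
  have h4 : CGame.reachW G (CGame.ml ξ₁) σ₂ T n [] s
      ≤ CGame.prReach G (CGame.ml ξ₁) σ₂ T s :=
    le_ciSup hbT n
  unfold CGame.prReach at h4 ⊢
  linarith
end
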